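/- arXiv:math/0407519 — 3 statements merged into one kernel-verified Lean document; each statement's English description precedes it below -/
import Mathlib

section
/- Cycle lemma for complete configurations: for k + ℓ + m = n, the set of pairs (ω, j) where ω is a two-row configuration of n+1 columns with k black and m + ℓ + 1 white particles in the top row and m black and k + ℓ + 1 white particles in the bottom row, and j ranges over the ℓ+1 columns where the prefix-difference E first attains the value d + 2i (d the minimum of E, i = 0..ℓ), is in bijection with the set of pairs (ω', i) where ω' is a 3-TASEP complete configuration in Ω^ℓ_{k,m} extended by a final neutral column and i ∈ {0,...,n}. Consequently |Ω^ℓ_{k,m}| · (n+1) = binomial(n+1, k) · binomial(n+1, m) · (ℓ+1). -/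
open Finset

-- Cells contain `some true` = black, `some false` = white, `none` = neutral.

/-- Number of black particles among the first `j` columns (both rows). -/
def bC (n : ℕ) (ω : Fin n × Bool → Option Bool) (j : ℕ) : ℕ :=
  ((Finset.univ : Finset (Fin n × Bool)).filter
    (fun p => p.1.val < j ∧ ω p = some true)).card

/-- Number of white particles among the first `j` columns (both rows). -/
def wC (n : ℕ) (ω : Fin n × Bool → Option Bool) (j : ℕ) : ℕ :=
  ((Finset.univ : Finset (Fin n × Bool)).filter
    (fun p => p.1.val < j ∧ ω p = some false)).card

/-- A 3-TASEP complete configuration: neutral particles occupy full columns; the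
black/white blocks between consecutive neutral columns are balanced (equal numbers
of black and white particles) and prefix-positive.  Equivalently: the prefix
difference `bC - wC` is nonnegative everywhere, vanishes at the right end, and
vanishes at the wall before every neutral column. -/
def IsComplete3 (n : ℕ) (ω : Fin n × Bool → Option Bool) : Prop :=
  (∀ i : Fin n, (ω (i, true) = none ↔ ω (i, false) = none)) ∧
  bC n ω n = wC n ω n ∧
  (∀ j ≤ n, wC n ω j ≤ bC n ω j) ∧
  (∀ i : Fin n, ω (i, true) = none → bC n ω i.val = wC n ω i.val)

instance (n : ℕ) : DecidablePred (IsComplete3 n) := fun ω => by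
  unfold IsComplete3; infer_instance

/-- Number of neutral columns. -/
def neutCount (n : ℕ) (ω : Fin n × Bool → Option Bool) : ℕ :=
  ((Finset.univ : Finset (Fin n)).filter (fun i => ω (i, true) = none)).card

/-- Number of black particles in the top row. -/
def topB (n : ℕ) (ω : Fin n × Bool → Option Bool) : ℕ :=
  ((Finset.univ : Finset (Fin n)).filter (fun i => ω (i, true) = some true)).card

/-- Number of white particles in the top row. -/
def topW (n : ℕ) (ω : Fin n × Bool → Option Bool) : ℕ :=
  ((Finset.univ : Finset (Fin n)).filter (fun i => ω (i, true) = some false)).card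

/-- Prefix difference (#black − #white) among the first `j` columns of a two-row
black/white configuration with `n+1` columns. -/
def Ez (n : ℕ) (γ : Fin (n + 1) × Bool → Bool) (j : ℕ) : ℤ :=
  (((Finset.univ : Finset (Fin (n + 1) × Bool)).filter
      (fun p => p.1.val < j ∧ γ p = true)).card : ℤ) -
    (((Finset.univ : Finset (Fin (n + 1) × Bool)).filter
      (fun p => p.1.val < j ∧ γ p = false)).card : ℤ)

/-- Minimum of the prefix difference over all walls `0,…,n+1`. -/
def dmin (n : ℕ) (γ : Fin (n + 1) × Bool → Bool) : ℤ :=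
  (((Finset.range (n + 2)).image (Ez n γ)).min' (by simp))

/-- The `ℓ+1` distinguished columns: column `c` is the first one at which the prefix
difference attains the value `dmin + 2i`, for some `i ≤ ℓ`. -/
def Dset (n ℓ : ℕ) (γ : Fin (n + 1) × Bool → Bool) : Finset (Fin (n + 1)) :=
  (Finset.univ : Finset (Fin (n + 1))).filter
    (fun c => ∃ i ≤ ℓ, Ez n γ (c.val + 1) = dmin n γ + 2 * (i : ℤ) ∧
      ∀ j ≤ c.val, Ez n γ j ≠ dmin n γ + 2 * (i : ℤ))

/-- Number of black (resp. white) particles in the row `r` of `γ`. -/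
def rowCount (n : ℕ) (γ : Fin (n + 1) × Bool → Bool) (r : Bool) (b : Bool) : ℕ :=
  ((Finset.univ : Finset (Fin (n + 1))).filter (fun i => γ (i, r) = b)).card

namespace CL

variable {n : ℕ}

def eg (n : ℕ) (γ : Fin (n+1) × Bool → Bool) (c : Fin (n+1)) : ℤ :=
  (if γ (c, true) = true then 1 else -1) + (if γ (c, false) = true then 1 else -1)

def et (n : ℕ) (γ : Fin (n+1) × Bool → Bool) (x : ℕ) : ℤ :=
  eg n γ ⟨x % (n+1), Nat.mod_lt _ (Nat.succ_pos n)⟩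

def Sh (n : ℕ) (γ : Fin (n+1) × Bool → Bool) (x : ℕ) : ℤ :=
  ∑ t ∈ range x, et n γ t

lemma Ez_eq_sum (γ : Fin (n+1) × Bool → Bool) (j : ℕ) :
    Ez n γ j = ∑ c : Fin (n+1), if c.val < j then eg n γ c else 0 := by
  unfold Ez
  rw [Finset.card_filter, Finset.card_filter]
  push_cast
  rw [Fintype.sum_prod_type, Fintype.sum_prod_type, ← Finset.sum_sub_distrib]
  refine Finset.sum_congr rfl fun c _ => ?_
  rw [Fintype.sum_bool, Fintype.sum_bool]
  unfold eg
  by_cases h : c.val < j <;> cases hb : γ (c, true) <;> cases hb2 : γ (c, false) <;>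
    simp [h, hb, hb2]

lemma Ez_eq_Sh (γ : Fin (n+1) × Bool → Bool) {j : ℕ} (hj : j ≤ n + 1) :
    Ez n γ j = Sh n γ j := by
  rw [Ez_eq_sum]
  have h1 : ∀ c : Fin (n+1), (if c.val < j then eg n γ c else 0)
      = (if c.val < j then et n γ c.val else 0) := by
    intro c
    simp only [et]
    congr 2
    ext; simp [Nat.mod_eq_of_lt c.isLt]
  calc (∑ c : Fin (n+1), if c.val < j then eg n γ c else 0)
      = ∑ c : Fin (n+1), (if c.val < j then et n γ c.val else 0) :=
        Finset.sum_congr rfl fun c _ => h1 c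
    _ = ∑ t ∈ range (n+1), (if t < j then et n γ t else 0) :=
        Fin.sum_univ_eq_sum_range (fun t => if t < j then et n γ t else 0) (n+1)
    _ = ∑ t ∈ range (n+1), (if t ∈ range j then et n γ t else 0) := by
        simp
    _ = ∑ t ∈ range (n+1) ∩ range j, et n γ t := by
        rw [Finset.sum_ite_mem]
    _ = Sh n γ j := by
        rw [Finset.inter_eq_right.mpr (Finset.range_subset_range.mpr hj)]; rfl

lemma Sh_zero (γ : Fin (n+1) × Bool → Bool) : Sh n γ 0 = 0 := by simp [Sh]

lemma Sh_succ (γ : Fin (n+1) × Bool → Bool) (x : ℕ) :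
    Sh n γ (x + 1) = Sh n γ x + et n γ x := Finset.sum_range_succ _ _

lemma eg_cases (γ : Fin (n+1) × Bool → Bool) (c : Fin (n+1)) :
    eg n γ c = -2 ∨ eg n γ c = 0 ∨ eg n γ c = 2 := by
  unfold eg; cases h1 : γ (c, true) <;> cases h2 : γ (c, false) <;> simp

lemma eg_eq_neg_two (γ : Fin (n+1) × Bool → Bool) (c : Fin (n+1)) :
    eg n γ c = -2 ↔ (γ (c, true) = false ∧ γ (c, false) = false) := by
  unfold eg; cases h1 : γ (c, true) <;> cases h2 : γ (c, false) <;> simp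

lemma et_bounds (γ : Fin (n+1) × Bool → Bool) (x : ℕ) :
    -2 ≤ et n γ x ∧ et n γ x ≤ 2 ∧ Even (et n γ x) := by
  rcases eg_cases γ ⟨x % (n+1), Nat.mod_lt _ (Nat.succ_pos n)⟩ with h | h | h <;>
    rw [et] <;> rw [h] <;> norm_num

lemma Sh_even (γ : Fin (n+1) × Bool → Bool) (x : ℕ) : Even (Sh n γ x) := by
  induction x with
  | zero => simp [Sh_zero]
  | succ x ih => rw [Sh_succ]; exact ih.add (et_bounds γ x).2.2

lemma et_period (γ : Fin (n+1) × Bool → Bool) (x : ℕ) :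
    et n γ (x + (n+1)) = et n γ x := by
  unfold et; congr 1; ext; simp [Nat.add_mod_right]

lemma Sh_add_period (γ : Fin (n+1) × Bool → Bool) (x : ℕ) :
    Sh n γ (x + (n+1)) = Sh n γ x + Sh n γ (n+1) := by
  induction x with
  | zero => simp [Sh_zero]
  | succ x ih =>
      have : x + 1 + (n+1) = (x + (n+1)) + 1 := by omega
      rw [this, Sh_succ γ (x+(n+1)), ih, et_period, Sh_succ γ x]; ring

lemma Sh_mod (γ : Fin (n+1) × Bool → Bool) (x : ℕ) :
    Sh n γ x = Sh n γ (x % (n+1)) + (x / (n+1) : ℕ) * Sh n γ (n+1) := by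
  induction x using Nat.strong_induction_on with
  | _ x ih =>
    rcases lt_or_ge x (n+1) with h | h
    · rw [Nat.mod_eq_of_lt h, Nat.div_eq_of_lt h]; simp
    · obtain ⟨y, rfl⟩ : ∃ y, x = y + (n+1) := ⟨x - (n+1), by omega⟩
      rw [Sh_add_period, ih y (by omega), Nat.add_mod_right,
        Nat.add_div_right _ (Nat.succ_pos n)]
      push_cast; ring

/-- the "no-skip" lemma -/
lemma noskip (γ : Fin (n+1) × Bool → Bool) {v : ℤ} (hv : Even v) (hv0 : v < 0)
    {c : ℕ} (hne : ∀ x ≤ c, Sh n γ x ≠ v) : v + 2 ≤ Sh n γ c := by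
  induction c with
  | zero =>
      have h0 : Sh n γ 0 = 0 := Sh_zero γ
      rw [h0]
      obtain ⟨a, ha⟩ := hv
      omega
  | succ c ih =>
      have h1 : v + 2 ≤ Sh n γ c := ih (fun x hx => hne x (by omega))
      have h2 : Sh n γ (c+1) = Sh n γ c + et n γ c := Sh_succ γ c
      have h3 := (et_bounds γ c).1
      have h4 : Sh n γ (c+1) ≠ v := hne (c+1) le_rfl
      have h5 : Even (Sh n γ (c+1) - v) := ((Sh_even γ (c+1)).sub hv)
      obtain ⟨a, ha⟩ := h5
      omega

lemma dmin_le (γ : Fin (n+1) × Bool → Bool) {x : ℕ} (hx : x ≤ n + 1) :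
    dmin n γ ≤ Sh n γ x := by
  rw [← Ez_eq_Sh γ hx]
  exact Finset.min'_le _ _ (Finset.mem_image_of_mem _ (Finset.mem_range.mpr (by omega)))

lemma dmin_exists (γ : Fin (n+1) × Bool → Bool) :
    ∃ x ≤ n + 1, Sh n γ x = dmin n γ := by
  have := Finset.min'_mem ((Finset.range (n + 2)).image (Ez n γ)) (by simp)
  rw [Finset.mem_image] at this
  obtain ⟨x, hx, hx2⟩ := this
  rw [Finset.mem_range] at hx
  exact ⟨x, by omega, by rw [← Ez_eq_Sh γ (by omega)]; exact hx2⟩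

lemma dmin_even (γ : Fin (n+1) × Bool → Bool) : Even (dmin n γ) := by
  obtain ⟨x, hx, hx2⟩ := dmin_exists γ
  rw [← hx2]; exact Sh_even γ x


/-- first attainment wall of the value `dmin + 2 i`. -/
noncomputable def Wf (n : ℕ) (γ : Fin (n+1) × Bool → Bool) (i : ℕ) : ℕ :=
  sInf {x | Sh n γ x = dmin n γ + 2*(i:ℤ)}

section D

variable {ℓ : ℕ} {γ : Fin (n+1) × Bool → Bool}

lemma attain_exists (hN : Sh n γ (n+1) = -2 * ((ℓ:ℤ)+1)) {i : ℕ} (hi : i ≤ ℓ) :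
    ∃ x, x ≤ n+1 ∧ Sh n γ x = dmin n γ + 2*(i:ℤ) := by
  have hdm : dmin n γ ≤ -2 * ((ℓ:ℤ)+1) := hN ▸ dmin_le γ le_rfl
  have hv0 : dmin n γ + 2*(i:ℤ) < 0 := by
    have : (i:ℤ) ≤ (ℓ:ℤ) := by exact_mod_cast hi
    linarith
  have hveven : Even (dmin n γ + 2*(i:ℤ)) := (dmin_even γ).add ⟨(i:ℤ), by ring⟩
  obtain ⟨x₀, hx₀, hx₀2⟩ := dmin_exists γ
  by_contra hcon
  push_neg at hcon
  have hne : ∀ x ≤ x₀, Sh n γ x ≠ dmin n γ + 2*(i:ℤ) := by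
    intro x hx
    exact hcon x (le_trans hx hx₀)
  have := noskip γ hveven hv0 hne
  have : (i:ℤ) ≥ 0 := Int.natCast_nonneg i
  omega

lemma Wf_spec (hN : Sh n γ (n+1) = -2 * ((ℓ:ℤ)+1)) {i : ℕ} (hi : i ≤ ℓ) :
    Sh n γ (Wf n γ i) = dmin n γ + 2*(i:ℤ) ∧ Wf n γ i ≤ n+1 ∧
    (∀ x, x < Wf n γ i → dmin n γ + 2*(i:ℤ) + 2 ≤ Sh n γ x) ∧ 1 ≤ Wf n γ i := by
  obtain ⟨x, hx, hx2⟩ := attain_exists hN hi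
  have hne : ({x | Sh n γ x = dmin n γ + 2*(i:ℤ)} : Set ℕ).Nonempty := ⟨x, hx2⟩
  have hspec : Sh n γ (Wf n γ i) = dmin n γ + 2*(i:ℤ) := Nat.sInf_mem hne
  have hmin : ∀ y, y < Wf n γ i → Sh n γ y ≠ dmin n γ + 2*(i:ℤ) := by
    intro y hy
    exact Nat.notMem_of_lt_sInf hy
  have hle : Wf n γ i ≤ n + 1 := le_trans (Nat.sInf_le hx2) hx
  have hv0 : dmin n γ + 2*(i:ℤ) < 0 := by
    have hdm : dmin n γ ≤ -2 * ((ℓ:ℤ)+1) := hN ▸ dmin_le γ le_rfl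
    have : (i:ℤ) ≤ (ℓ:ℤ) := by exact_mod_cast hi
    linarith
  have hveven : Even (dmin n γ + 2*(i:ℤ)) := (dmin_even γ).add ⟨(i:ℤ), by ring⟩
  refine ⟨hspec, hle, ?_, ?_⟩
  · intro x hxlt
    exact noskip γ hveven hv0 (fun y hy => hmin y (by omega))
  · rcases Nat.eq_zero_or_pos (Wf n γ i) with h0 | h0
    · exfalso; rw [h0, Sh_zero] at hspec; omega
    · exact h0

lemma Wf_anti (hN : Sh n γ (n+1) = -2 * ((ℓ:ℤ)+1)) {i i' : ℕ} (hii : i' < i) (hi : i ≤ ℓ) :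
    Wf n γ i < Wf n γ i' := by
  obtain ⟨hs, _, hstr, _⟩ := Wf_spec hN hi
  obtain ⟨hs', _, _, _⟩ := Wf_spec hN (le_trans (le_of_lt hii) hi)
  by_contra hcon
  push_neg at hcon
  rcases lt_or_eq_of_le hcon with h | h
  · have := hstr _ h
    rw [hs'] at this
    have : (i':ℤ) < (i:ℤ) := by exact_mod_cast hii
    omega
  · rw [h] at hs'
    rw [hs'] at hs
    have : (i':ℤ) = (i:ℤ) := by omega
    have : i' = i := by exact_mod_cast this
    omega

lemma Wf_le_iff (hN : Sh n γ (n+1) = -2 * ((ℓ:ℤ)+1)) {i i' : ℕ} (hi : i ≤ ℓ) (hi' : i' ≤ ℓ) :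
    Wf n γ i' ≤ Wf n γ i ↔ i ≤ i' := by
  constructor
  · intro hle
    by_contra hcon
    push_neg at hcon
    have := Wf_anti hN hcon hi
    omega
  · intro hle
    rcases lt_or_eq_of_le hle with h | h
    · exact le_of_lt (Wf_anti hN h hi')
    · rw [h]

lemma Dset_iff (hN : Sh n γ (n+1) = -2 * ((ℓ:ℤ)+1)) (c : Fin (n+1)) :
    c ∈ Dset n ℓ γ ↔ ∃ i ≤ ℓ, c.val + 1 = Wf n γ i := by
  rw [Dset, Finset.mem_filter]
  simp only [Finset.mem_univ, true_and]
  constructor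
  · rintro ⟨i, hi, h1, h2⟩
    refine ⟨i, hi, ?_⟩
    obtain ⟨hs, hle, hstr, hpos⟩ := Wf_spec hN hi
    rw [Ez_eq_Sh γ (by omega : c.val + 1 ≤ n + 1)] at h1
    have hWle : Wf n γ i ≤ c.val + 1 := Nat.sInf_le h1
    rcases lt_or_eq_of_le hWle with h | h
    · exfalso
      have hj : Wf n γ i ≤ c.val := by omega
      have := h2 (Wf n γ i) hj
      rw [Ez_eq_Sh γ (by omega : Wf n γ i ≤ n + 1)] at this
      exact this hs
    · omega
  · rintro ⟨i, hi, hc⟩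
    obtain ⟨hs, hle, hstr, hpos⟩ := Wf_spec hN hi
    refine ⟨i, hi, ?_, ?_⟩
    · rw [Ez_eq_Sh γ (by omega : c.val + 1 ≤ n + 1), hc, hs]
    · intro j hj
      rw [Ez_eq_Sh γ (by omega : j ≤ n + 1)]
      have := hstr j (by omega)
      omega

lemma Wf_inj (hN : Sh n γ (n+1) = -2 * ((ℓ:ℤ)+1)) {i i' : ℕ} (hi : i ≤ ℓ) (hi' : i' ≤ ℓ)
    (h : Wf n γ i = Wf n γ i') : i = i' := by
  obtain ⟨hs, _, _, _⟩ := Wf_spec hN hi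
  obtain ⟨hs', _, _, _⟩ := Wf_spec hN hi'
  rw [h, hs'] at hs
  have : (i:ℤ) = (i':ℤ) := by omega
  exact_mod_cast this

lemma Dset_card (hN : Sh n γ (n+1) = -2 * ((ℓ:ℤ)+1)) : (Dset n ℓ γ).card = ℓ + 1 := by
  have hWb : ∀ i ∈ Finset.range (ℓ+1), Wf n γ i - 1 < n + 1 := by
    intro i hi
    rw [Finset.mem_range] at hi
    obtain ⟨_, h2, _, h4⟩ := Wf_spec hN (by omega : i ≤ ℓ)
    omega
  have key : (Finset.range (ℓ+1)).card = (Dset n ℓ γ).card := by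
    refine Finset.card_bij (fun i hi => (⟨Wf n γ i - 1, hWb i hi⟩ : Fin (n+1))) ?_ ?_ ?_
    · intro a ha
      rw [Finset.mem_range] at ha
      obtain ⟨_, _, _, h4⟩ := Wf_spec hN (by omega : a ≤ ℓ)
      rw [Dset_iff hN]
      exact ⟨a, by omega, by simp; omega⟩
    · intro a ha a' ha' heq
      rw [Finset.mem_range] at ha ha'
      obtain ⟨_, _, _, h4⟩ := Wf_spec hN (by omega : a ≤ ℓ)
      obtain ⟨_, _, _, h4'⟩ := Wf_spec hN (by omega : a' ≤ ℓ)
      have : Wf n γ a - 1 = Wf n γ a' - 1 := by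
        simpa using congrArg Fin.val heq
      exact Wf_inj hN (by omega) (by omega) (by omega)
    · intro b hb
      rw [Dset_iff hN] at hb
      obtain ⟨i, hi, hbi⟩ := hb
      refine ⟨i, Finset.mem_range.mpr (by omega), ?_⟩
      ext
      simp
      omega
  rw [Finset.card_range] at key
  omega


noncomputable def gstep (n ℓ : ℕ) (γ : Fin (n+1) × Bool → Bool) (t : ℕ) : ℤ :=
  if (⟨t % (n+1), Nat.mod_lt _ (Nat.succ_pos n)⟩ : Fin (n+1)) ∈ Dset n ℓ γ then 1 else 0

noncomputable def GS (n ℓ : ℕ) (γ : Fin (n+1) × Bool → Bool) (x : ℕ) : ℤ :=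
  ∑ t ∈ range x, gstep n ℓ γ t

noncomputable def Ht (n ℓ : ℕ) (γ : Fin (n+1) × Bool → Bool) (x : ℕ) : ℤ :=
  Sh n γ x + 2 * GS n ℓ γ x

variable {ℓ : ℕ} {γ : Fin (n+1) × Bool → Bool}

lemma gstep_period (t : ℕ) : gstep n ℓ γ (t + (n+1)) = gstep n ℓ γ t := by
  unfold gstep; congr 2; ext; simp [Nat.add_mod_right]

lemma GS_succ (x : ℕ) : GS n ℓ γ (x+1) = GS n ℓ γ x + gstep n ℓ γ x :=
  Finset.sum_range_succ _ _

lemma GS_add_period (x : ℕ) :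
    GS n ℓ γ (x + (n+1)) = GS n ℓ γ x + GS n ℓ γ (n+1) := by
  induction x with
  | zero => simp [GS]
  | succ x ih =>
      have h : x + 1 + (n+1) = (x + (n+1)) + 1 := by omega
      rw [h, GS_succ (x+(n+1)), ih, gstep_period, GS_succ x]; ring

lemma GS_eq_card {z : ℕ} (hz : z ≤ n + 1) :
    GS n ℓ γ z = ((Finset.range z).filter
      (fun t => (⟨t % (n+1), Nat.mod_lt _ (Nat.succ_pos n)⟩ : Fin (n+1)) ∈ Dset n ℓ γ)).card := by
  rw [GS, Finset.card_filter]
  push_cast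
  rfl

lemma GS_eq_W (hN : Sh n γ (n+1) = -2 * ((ℓ:ℤ)+1)) {z : ℕ} (hz : z ≤ n + 1) :
    GS n ℓ γ z = ((Finset.range (ℓ+1)).filter (fun i => Wf n γ i ≤ z)).card := by
  rw [GS_eq_card hz]
  congr 1
  refine Finset.card_bij (fun i hi => Wf n γ i - 1) ?_ ?_ ?_ |>.symm
  · intro a ha
    simp only [Finset.mem_filter, Finset.mem_range] at ha ⊢
    obtain ⟨ha1, ha2⟩ := ha
    obtain ⟨_, hle, _, hpos⟩ := Wf_spec hN (by omega : a ≤ ℓ)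
    have h1 : Wf n γ a - 1 < z := by omega
    refine ⟨h1, ?_⟩
    rw [Dset_iff hN]
    refine ⟨a, by omega, ?_⟩
    simp only
    rw [Nat.mod_eq_of_lt (by omega : Wf n γ a - 1 < n + 1)]
    omega
  · intro a ha a' ha' heq
    simp only [Finset.mem_filter, Finset.mem_range] at ha ha'
    have heq' : Wf n γ a - 1 = Wf n γ a' - 1 := heq
    obtain ⟨_, _, _, h4⟩ := Wf_spec hN (by omega : a ≤ ℓ)
    obtain ⟨_, _, _, h4'⟩ := Wf_spec hN (by omega : a' ≤ ℓ)
    exact Wf_inj hN (by omega) (by omega) (by omega)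
  · intro b hb
    simp only [Finset.mem_filter, Finset.mem_range] at hb
    obtain ⟨hb1, hb2⟩ := hb
    rw [Dset_iff hN] at hb2
    obtain ⟨i, hi, hbi⟩ := hb2
    simp only at hbi
    rw [Nat.mod_eq_of_lt (by omega : b < n + 1)] at hbi
    refine ⟨i, Finset.mem_filter.mpr ⟨Finset.mem_range.mpr (by omega), by omega⟩, ?_⟩
    show Wf n γ i - 1 = b
    omega

lemma GS_N (hN : Sh n γ (n+1) = -2 * ((ℓ:ℤ)+1)) : GS n ℓ γ (n+1) = (ℓ:ℤ) + 1 := by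
  rw [GS_eq_W hN le_rfl]
  have : (Finset.range (ℓ+1)).filter (fun i => Wf n γ i ≤ n+1) = Finset.range (ℓ+1) := by
    apply Finset.filter_true_of_mem
    intro i hi
    rw [Finset.mem_range] at hi
    exact (Wf_spec hN (by omega : i ≤ ℓ)).2.1
  rw [this]
  push_cast [Finset.card_range]
  ring

lemma Ht_add_period (hN : Sh n γ (n+1) = -2 * ((ℓ:ℤ)+1)) (x : ℕ) :
    Ht n ℓ γ (x + (n+1)) = Ht n ℓ γ x := by
  unfold Ht
  rw [Sh_add_period, GS_add_period, GS_N hN, hN]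
  ring

lemma Ht_mod (hN : Sh n γ (n+1) = -2 * ((ℓ:ℤ)+1)) (x : ℕ) :
    Ht n ℓ γ x = Ht n ℓ γ (x % (n+1)) := by
  induction x using Nat.strong_induction_on with
  | _ x ih =>
    rcases lt_or_ge x (n+1) with h | h
    · rw [Nat.mod_eq_of_lt h]
    · obtain ⟨y, rfl⟩ : ∃ y, x = y + (n+1) := ⟨x - (n+1), by omega⟩
      rw [Ht_add_period hN, ih y (by omega), Nat.add_mod_right]

lemma Ht_min (hN : Sh n γ (n+1) = -2 * ((ℓ:ℤ)+1)) {z : ℕ} (hz : z ≤ n + 1) :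
    dmin n γ + 2 * ((ℓ:ℤ)+1) ≤ Ht n ℓ γ z := by
  unfold Ht
  rw [GS_eq_W hN hz]
  set S := (Finset.range (ℓ+1)).filter (fun i => z < Wf n γ i) with hS
  have hcompl : ((Finset.range (ℓ+1)).filter (fun i => Wf n γ i ≤ z)).card + S.card = ℓ + 1 := by
    rw [hS]
    have := Finset.card_filter_add_card_filter_not
      (s := Finset.range (ℓ+1)) (p := fun i => Wf n γ i ≤ z)
    simp only [not_le] at this
    rw [Finset.card_range] at this
    exact this
  rcases Finset.eq_empty_or_nonempty S with hSe | hSne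
  · rw [hSe] at hcompl
    simp at hcompl
    rw [hcompl]
    have := dmin_le γ hz
    push_cast
    linarith
  · set istar := S.max' hSne with histar
    have histarS : istar ∈ S := Finset.max'_mem _ _
    simp only [hS, Finset.mem_filter, Finset.mem_range] at histarS
    obtain ⟨histar1, histar2⟩ := histarS
    have hSeq : S = Finset.range (istar + 1) := by
      ext i
      simp only [hS, Finset.mem_filter, Finset.mem_range]
      constructor
      · intro ⟨h1, h2⟩
        have hmem : i ∈ S := by
          rw [hS]; exact Finset.mem_filter.mpr ⟨Finset.mem_range.mpr h1, h2⟩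
        have : i ≤ istar := Finset.le_max' S i hmem
        omega
      · intro hi
        have hile : i ≤ ℓ := by omega
        refine ⟨by omega, ?_⟩
        calc z < Wf n γ istar := histar2
          _ ≤ Wf n γ i := (Wf_le_iff hN hile (by omega : istar ≤ ℓ)).mpr (by omega)
    have hcard : S.card = istar + 1 := by rw [hSeq, Finset.card_range]
    have hfc : ((Finset.range (ℓ+1)).filter (fun i => Wf n γ i ≤ z)).card = ℓ - istar := by omega
    obtain ⟨_, _, hstr, _⟩ := Wf_spec hN (by omega : istar ≤ ℓ)
    have hSh := hstr z histar2
    rw [hfc]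
    have hc : ((ℓ - istar : ℕ) : ℤ) = (ℓ:ℤ) - istar := by omega
    rw [hc]
    linarith

lemma Ht_at_W (hN : Sh n γ (n+1) = -2 * ((ℓ:ℤ)+1)) {i : ℕ} (hi : i ≤ ℓ) :
    Ht n ℓ γ (Wf n γ i) = dmin n γ + 2*((ℓ:ℤ)+1) := by
  obtain ⟨hs, hle, _, hpos⟩ := Wf_spec hN hi
  unfold Ht
  rw [GS_eq_W hN hle, hs]
  have h1 : (Finset.range (ℓ+1)).filter (fun i' => Wf n γ i' ≤ Wf n γ i)
      = Finset.Ico i (ℓ+1) := by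
    ext i'
    simp only [Finset.mem_filter, Finset.mem_range, Finset.mem_Ico]
    constructor
    · rintro ⟨h1, h2⟩
      exact ⟨(Wf_le_iff hN hi (by omega)).mp h2, h1⟩
    · rintro ⟨h1, h2⟩
      exact ⟨by omega, (Wf_le_iff hN hi (by omega)).mpr h1⟩
  rw [h1, Nat.card_Ico]
  have h2 : ((ℓ + 1 - i : ℕ) : ℤ) = (ℓ:ℤ) + 1 - i := by omega
  rw [h2]; ring

lemma Sh_W_pred (hN : Sh n γ (n+1) = -2 * ((ℓ:ℤ)+1)) {i : ℕ} (hi : i ≤ ℓ) :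
    Sh n γ (Wf n γ i - 1) = dmin n γ + 2*(i:ℤ) + 2 := by
  obtain ⟨hs, hle, hstr, hpos⟩ := Wf_spec hN hi
  have h1 := hstr (Wf n γ i - 1) (by omega)
  have h2 := Sh_succ γ (Wf n γ i - 1)
  rw [show Wf n γ i - 1 + 1 = Wf n γ i from by omega] at h2
  have h3 := (et_bounds γ (Wf n γ i - 1)).1
  omega

lemma et_W_pred (hN : Sh n γ (n+1) = -2 * ((ℓ:ℤ)+1)) {i : ℕ} (hi : i ≤ ℓ) :
    et n γ (Wf n γ i - 1) = -2 := by
  obtain ⟨hs, hle, hstr, hpos⟩ := Wf_spec hN hi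
  have h2 := Sh_succ γ (Wf n γ i - 1)
  rw [show Wf n γ i - 1 + 1 = Wf n γ i from by omega] at h2
  have := Sh_W_pred hN hi
  omega

lemma Dset_white (hN : Sh n γ (n+1) = -2 * ((ℓ:ℤ)+1)) {c : Fin (n+1)} (hc : c ∈ Dset n ℓ γ) :
    γ (c, true) = false ∧ γ (c, false) = false := by
  rw [Dset_iff hN] at hc
  obtain ⟨i, hi, hci⟩ := hc
  have h1 := et_W_pred hN hi
  rw [show Wf n γ i - 1 = c.val from by omega] at h1
  rw [et] at h1
  have h2 : (⟨c.val % (n+1), Nat.mod_lt _ (Nat.succ_pos n)⟩ : Fin (n+1)) = c := by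
    ext; simp [Nat.mod_eq_of_lt c.isLt]
  rw [h2] at h1
  exact (eg_eq_neg_two γ c).mp h1

lemma Ht_at_W_pred (hN : Sh n γ (n+1) = -2 * ((ℓ:ℤ)+1)) {i : ℕ} (hi : i ≤ ℓ) :
    Ht n ℓ γ (Wf n γ i - 1) = dmin n γ + 2*((ℓ:ℤ)+1) := by
  obtain ⟨hs, hle, _, hpos⟩ := Wf_spec hN hi
  unfold Ht
  rw [GS_eq_W hN (by omega : Wf n γ i - 1 ≤ n + 1), Sh_W_pred hN hi]
  have h1 : (Finset.range (ℓ+1)).filter (fun i' => Wf n γ i' ≤ Wf n γ i - 1)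
      = Finset.Ico (i+1) (ℓ+1) := by
    ext i'
    simp only [Finset.mem_filter, Finset.mem_range, Finset.mem_Ico]
    constructor
    · rintro ⟨h1, h2⟩
      have h3 : ¬ (Wf n γ i ≤ Wf n γ i') := by omega
      rw [Wf_le_iff hN (by omega) hi] at h3
      omega
    · rintro ⟨h1, h2⟩
      refine ⟨by omega, ?_⟩
      have h3 : Wf n γ i' < Wf n γ i := Wf_anti hN (by omega) (by omega)
      omega
  rw [h1, Nat.card_Ico]
  have h2 : ((ℓ + 1 - (i+1) : ℕ) : ℤ) = (ℓ:ℤ) - i := by omega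
  rw [h2]; ring

end D


/-! generic sum lemmas -/

lemma psum_shift_full {a : ℕ → ℤ} {N : ℕ} (ha : ∀ t, a (t + N) = a t) (s : ℕ) :
    ∑ t ∈ range N, a (t + s) = ∑ t ∈ range N, a t := by
  induction s with
  | zero => simp
  | succ s ih =>
    have h1 : ∑ t ∈ range (N+1), a (t + s) = ∑ t ∈ range N, a (t + s) + a (N + s) :=
      Finset.sum_range_succ _ _
    have h2 : ∑ t ∈ range (N+1), a (t + s) = ∑ t ∈ range N, a (t + 1 + s) + a (0 + s) :=
      Finset.sum_range_succ' _ _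
    have h3 : ∑ t ∈ range N, a (t + 1 + s) = ∑ t ∈ range N, a (t + (s+1)) :=
      Finset.sum_congr rfl (fun i _ => by rw [show i + 1 + s = i + (s+1) from by omega])
    have h4 : a (N + s) = a (0 + s) := by rw [show N + s = s + N from by omega, ha]; simp
    rw [h3] at h2
    rw [← ih]
    omega

lemma psum_mod' {a : ℕ → ℤ} {N : ℕ} (hN : 0 < N) (ha : ∀ t, a (t + N) = a t) (x : ℕ) :
    ∑ t ∈ range x, a t
      = ∑ t ∈ range (x % N), a t + (x / N : ℕ) * ∑ t ∈ range N, a t := by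
  induction x using Nat.strong_induction_on with
  | _ x ih =>
    rcases lt_or_ge x N with h | h
    · rw [Nat.mod_eq_of_lt h, Nat.div_eq_of_lt h]; simp
    · obtain ⟨y, rfl⟩ : ∃ y, x = y + N := ⟨x - N, by omega⟩
      have hsplit : ∑ t ∈ range (y + N), a t
          = ∑ t ∈ range y, a t + ∑ t ∈ range N, a (y + t) := Finset.sum_range_add _ _ _
      have hshift : ∑ t ∈ range N, a (y + t) = ∑ t ∈ range N, a t := by
        rw [← psum_shift_full ha y]
        exact Finset.sum_congr rfl (fun i _ => by rw [Nat.add_comm])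
      rw [hsplit, hshift, ih y (by omega), Nat.add_mod_right, Nat.add_div_right _ hN]
      push_cast
      ring

lemma cardPB_eq_sum {q : ℕ} (P : Fin q × Bool → Prop) [DecidablePred P] {j : ℕ} (f : ℕ → ℤ)
    (hf : ∀ c : Fin q, c.val < j →
      f c.val = (if P (c,true) then 1 else 0) + (if P (c,false) then 1 else 0))
    (hj : j ≤ q) :
    ((((Finset.univ : Finset (Fin q × Bool)).filter (fun p => p.1.val < j ∧ P p)).card : ℤ))
      = ∑ t ∈ range j, f t := by
  rw [Finset.card_filter]
  push_cast
  rw [Fintype.sum_prod_type]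
  have h1 : ∀ c : Fin q, (∑ b : Bool, if c.val < j ∧ P (c, b) then (1:ℤ) else 0)
      = (if c.val < j then f c.val else 0) := by
    intro c
    rw [Fintype.sum_bool]
    by_cases h : c.val < j
    · rw [hf c h]
      by_cases h1 : P (c, true) <;> by_cases h2 : P (c, false) <;> simp [h, h1, h2] <;> ring
    · simp [h]
  calc (∑ c : Fin q, ∑ b : Bool, if c.val < j ∧ P (c, b) then (1:ℤ) else 0)
      = ∑ c : Fin q, (if c.val < j then f c.val else 0) :=
        Finset.sum_congr rfl (fun c _ => h1 c)
    _ = ∑ t ∈ range q, (if t < j then f t else 0) :=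
        Fin.sum_univ_eq_sum_range (fun t => if t < j then f t else 0) q
    _ = ∑ t ∈ range q, (if t ∈ range j then f t else 0) := by simp
    _ = ∑ t ∈ range q ∩ range j, f t := by rw [Finset.sum_ite_mem]
    _ = ∑ t ∈ range j, f t := by
        rw [Finset.inter_eq_right.mpr (Finset.range_subset_range.mpr hj)]

lemma card1_eq_sum {q : ℕ} (P : Fin q → Prop) [DecidablePred P] (f : ℕ → ℤ)
    (hf : ∀ c : Fin q, f c.val = if P c then 1 else 0) :
    ((((Finset.univ : Finset (Fin q)).filter P).card : ℤ)) = ∑ t ∈ range q, f t := by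
  rw [Finset.card_filter]
  push_cast
  calc (∑ c : Fin q, if P c then (1:ℤ) else 0)
      = ∑ c : Fin q, f c.val := Finset.sum_congr rfl (fun c _ => (hf c).symm)
    _ = ∑ t ∈ range q, f t := Fin.sum_univ_eq_sum_range f q

/-! the ω side -/

def oc (n : ℕ) (ω : Fin n × Bool → Option Bool) (t : ℕ) (r : Bool) : Option Bool :=
  if h : t % (n+1) < n then ω (⟨t % (n+1), h⟩, r) else none

def cB (v : Option Bool) : ℤ := if v = some true then 1 else 0
def cW (v : Option Bool) : ℤ := if v = some false then 1 else 0
def cN (v : Option Bool) : ℤ := if v = none then 1 else 0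
def cE (v : Option Bool) : ℤ := if v = some true then 1 else -1

def awt (n : ℕ) (ω : Fin n × Bool → Option Bool) (t : ℕ) : ℤ :=
  cE (oc n ω t true) + cE (oc n ω t false)
def bwt (n : ℕ) (ω : Fin n × Bool → Option Bool) (t : ℕ) : ℤ :=
  cB (oc n ω t true) + cB (oc n ω t false)
def wwt (n : ℕ) (ω : Fin n × Bool → Option Bool) (t : ℕ) : ℤ :=
  cW (oc n ω t true) + cW (oc n ω t false)
def nwt (n : ℕ) (ω : Fin n × Bool → Option Bool) (t : ℕ) : ℤ :=
  cN (oc n ω t true)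

variable {n : ℕ} {ω : Fin n × Bool → Option Bool}

lemma oc_period (t : ℕ) (r : Bool) : oc n ω (t + (n+1)) r = oc n ω t r := by
  unfold oc; rw [Nat.add_mod_right]

lemma col_split (hC1 : ∀ i : Fin n, (ω (i, true) = none ↔ ω (i, false) = none)) (t : ℕ) :
    awt n ω t = bwt n ω t - wwt n ω t - 2 * nwt n ω t := by
  have hcouple : (oc n ω t true = none ↔ oc n ω t false = none) := by
    unfold oc; split
    · exact hC1 _
    · simp
  unfold awt bwt wwt nwt
  rcases h1 : oc n ω t true with _ | b1 <;> rcases h2 : oc n ω t false with _ | b2 <;>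
    rw [h1, h2] at hcouple <;> simp at hcouple <;>
    first
      | (cases b1 <;> cases b2 <;> simp [cE, cB, cW, cN])
      | (try cases b1) <;> (try cases b2) <;> simp [cE, cB, cW, cN]

def Aw (n : ℕ) (ω : Fin n × Bool → Option Bool) (x : ℕ) : ℤ := ∑ t ∈ range x, awt n ω t
def Bw (n : ℕ) (ω : Fin n × Bool → Option Bool) (x : ℕ) : ℤ := ∑ t ∈ range x, bwt n ω t
def Ww (n : ℕ) (ω : Fin n × Bool → Option Bool) (x : ℕ) : ℤ := ∑ t ∈ range x, wwt n ω t
def Nw (n : ℕ) (ω : Fin n × Bool → Option Bool) (x : ℕ) : ℤ := ∑ t ∈ range x, nwt n ω t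

variable {n : ℕ} {ω : Fin n × Bool → Option Bool}

lemma awt_period (t : ℕ) : awt n ω (t + (n+1)) = awt n ω t := by
  unfold awt; rw [oc_period, oc_period]
lemma nwt_period (t : ℕ) : nwt n ω (t + (n+1)) = nwt n ω t := by
  unfold nwt; rw [oc_period]

lemma Aw_split (hC1 : ∀ i : Fin n, (ω (i, true) = none ↔ ω (i, false) = none)) (x : ℕ) :
    Aw n ω x = Bw n ω x - Ww n ω x - 2 * Nw n ω x := by
  unfold Aw Bw Ww Nw
  calc ∑ t ∈ range x, awt n ω t
      = ∑ t ∈ range x, (bwt n ω t - wwt n ω t - 2 * nwt n ω t) :=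
        Finset.sum_congr rfl (fun t _ => col_split hC1 t)
    _ = _ := by rw [Finset.sum_sub_distrib, Finset.sum_sub_distrib, Finset.mul_sum]

lemma oc_eq_self {t : ℕ} (ht : t < n) (r : Bool) : oc n ω t r = ω (⟨t, ht⟩, r) := by
  unfold oc
  simp only [Nat.mod_eq_of_lt (show t < n+1 by omega)]
  rw [dif_pos ht]

lemma oc_last (r : Bool) : oc n ω n r = none := by
  unfold oc
  rw [dif_neg]
  rw [Nat.mod_eq_of_lt (by omega)]
  omega

lemma bC_cast {x : ℕ} (hx : x ≤ n) : (bC n ω x : ℤ) = Bw n ω x := by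
  unfold bC Bw
  refine cardPB_eq_sum (fun p => ω p = some true) (bwt n ω) ?_ hx
  intro c hc
  unfold bwt
  rw [oc_eq_self c.isLt, oc_eq_self c.isLt]
  simp [cB]

lemma wC_cast {x : ℕ} (hx : x ≤ n) : (wC n ω x : ℤ) = Ww n ω x := by
  unfold wC Ww
  refine cardPB_eq_sum (fun p => ω p = some false) (wwt n ω) ?_ hx
  intro c hc
  unfold wwt
  rw [oc_eq_self c.isLt, oc_eq_self c.isLt]
  simp [cW]

lemma neutCount_cast : (neutCount n ω : ℤ) = Nw n ω n := by
  unfold neutCount Nw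
  refine card1_eq_sum (fun i => ω (i, true) = none) (nwt n ω) ?_
  intro c
  unfold nwt
  rw [oc_eq_self c.isLt]
  simp [cN]

lemma topB_cast : (topB n ω : ℤ) = ∑ t ∈ range n, cB (oc n ω t true) := by
  unfold topB
  refine card1_eq_sum (fun i => ω (i, true) = some true) (fun t => cB (oc n ω t true)) ?_
  intro c
  show cB (oc n ω c.val true) = _
  rw [oc_eq_self c.isLt]
  simp [cB]

lemma topW_cast : (topW n ω : ℤ) = ∑ t ∈ range n, cW (oc n ω t true) := by
  unfold topW
  refine card1_eq_sum (fun i => ω (i, true) = some false) (fun t => cW (oc n ω t true)) ?_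
  intro c
  show cW (oc n ω c.val true) = _
  rw [oc_eq_self c.isLt]
  simp [cW]

section Complete
variable (hC : IsComplete3 n ω) (hneut : neutCount n ω = ℓ)

lemma Nw_N : neutCount n ω = ℓ → Nw n ω (n+1) = (ℓ:ℤ) + 1 := by
  intro hneut
  unfold Nw
  rw [Finset.sum_range_succ]
  have h1 : nwt n ω n = 1 := by unfold nwt; rw [oc_last]; simp [cN]
  rw [h1]
  have h2 : Nw n ω n = (ℓ:ℤ) := by rw [← neutCount_cast, hneut]
  unfold Nw at h2
  omega

lemma Bw_N : Bw n ω (n+1) = Bw n ω n := by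
  unfold Bw
  rw [Finset.sum_range_succ]
  have h1 : bwt n ω n = 0 := by unfold bwt; rw [oc_last, oc_last]; simp [cB]
  omega

lemma Ww_N : Ww n ω (n+1) = Ww n ω n := by
  unfold Ww
  rw [Finset.sum_range_succ]
  have h1 : wwt n ω n = 0 := by unfold wwt; rw [oc_last, oc_last]; simp [cW]
  omega

lemma Aw_N (hC : IsComplete3 n ω) (hneut : neutCount n ω = ℓ) :
    Aw n ω (n+1) = -2 * ((ℓ:ℤ) + 1) := by
  rw [Aw_split hC.1, Bw_N, Ww_N, Nw_N hneut]
  have h2 : Bw n ω n = Ww n ω n := by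
    rw [← bC_cast le_rfl, ← wC_cast le_rfl, hC.2.1]
  omega

lemma Aw_ge_base (hC : IsComplete3 n ω) {x : ℕ} (hx : x ≤ n + 1) :
    -2 * Nw n ω x ≤ Aw n ω x := by
  rw [Aw_split hC.1]
  rcases Nat.lt_or_ge x (n+1) with h | h
  · have h2 : Ww n ω x ≤ Bw n ω x := by
      rw [← bC_cast (by omega), ← wC_cast (by omega)]
      exact_mod_cast hC.2.2.1 x (by omega)
    omega
  · have hxe : x = n + 1 := by omega
    subst hxe
    rw [Bw_N, Ww_N]
    have h2 : Bw n ω n = Ww n ω n := by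
      rw [← bC_cast le_rfl, ← wC_cast le_rfl, hC.2.1]
    omega

lemma Aw_mod (x : ℕ) :
    Aw n ω x = Aw n ω (x % (n+1)) + (x / (n+1) : ℕ) * Aw n ω (n+1) :=
  psum_mod' (Nat.succ_pos n) awt_period x

lemma Nw_mod (x : ℕ) :
    Nw n ω x = Nw n ω (x % (n+1)) + (x / (n+1) : ℕ) * Nw n ω (n+1) :=
  psum_mod' (Nat.succ_pos n) nwt_period x

lemma Aw_ge (hC : IsComplete3 n ω) (hneut : neutCount n ω = ℓ) (x : ℕ) :
    -2 * Nw n ω x ≤ Aw n ω x := by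
  rw [Aw_mod, Nw_mod, Aw_N hC hneut, Nw_N hneut]
  have h1 := Aw_ge_base hC (x := x % (n+1)) (le_of_lt (Nat.mod_lt _ (Nat.succ_pos n)))
  nlinarith [Int.natCast_nonneg (x / (n+1))]

lemma Nw_mono : Monotone (Nw n ω) := by
  intro x y hxy
  unfold Nw
  apply Finset.sum_le_sum_of_subset_of_nonneg (Finset.range_subset_range.mpr hxy)
  intro t _ _
  unfold nwt cN
  split <;> norm_num

lemma Nw_succ (x : ℕ) : Nw n ω (x+1) = Nw n ω x + nwt n ω x := Finset.sum_range_succ _ _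
lemma Aw_succ (x : ℕ) : Aw n ω (x+1) = Aw n ω x + awt n ω x := Finset.sum_range_succ _ _

lemma oc_mod (t : ℕ) (r : Bool) : oc n ω t r = oc n ω (t % (n+1)) r := by
  have h : t % (n+1) % (n+1) = t % (n+1) := Nat.mod_mod_of_dvd t dvd_rfl
  unfold oc
  rw [h]

lemma neut_wall (hC : IsComplete3 n ω) (hneut : neutCount n ω = ℓ) {x : ℕ}
    (hx : oc n ω x true = none) :
    Aw n ω x = -2 * Nw n ω x ∧ Aw n ω (x+1) = -2 * Nw n ω x - 2
      ∧ Nw n ω (x+1) = Nw n ω x + 1 := by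
  have hnwt : nwt n ω x = 1 := by unfold nwt; rw [hx]; simp [cN]
  have hawt : awt n ω x = -2 := by
    have := col_split hC.1 x
    have hb : bwt n ω x = 0 := by
      unfold bwt
      have h2 : oc n ω x false = none := by
        revert hx
        unfold oc
        split
        · exact fun hx => (hC.1 _).mp hx
        · simp
      rw [hx, h2]; simp [cB]
    have hw : wwt n ω x = 0 := by
      unfold wwt
      have h2 : oc n ω x false = none := by
        revert hx
        unfold oc
        split
        · exact fun hx => (hC.1 _).mp hx
        · simp
      rw [hx, h2]; simp [cW]
    omega
  have hbase : ∀ y ≤ n, oc n ω y true = none → Aw n ω y = -2 * Nw n ω y := by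
    intro y hy hyn
    rw [Aw_split hC.1]
    have hbw : Bw n ω y = Ww n ω y := by
      rcases Nat.lt_or_ge y n with h | h
      · rw [← bC_cast (by omega), ← wC_cast (by omega)]
        rw [oc_eq_self h] at hyn
        exact_mod_cast hC.2.2.2 ⟨y, h⟩ hyn
      · have hyn' : y = n := by omega
        subst hyn'
        rw [← bC_cast le_rfl, ← wC_cast le_rfl, hC.2.1]
    omega
  have hmain : Aw n ω x = -2 * Nw n ω x := by
    have hx' : oc n ω (x % (n+1)) true = none := by rw [← oc_mod]; exact hx
    have h1 := hbase (x % (n+1)) (Nat.lt_succ_iff.mp (Nat.mod_lt _ (Nat.succ_pos n))) hx'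
    rw [Aw_mod, Nw_mod, Aw_N hC hneut, Nw_N hneut, h1]
    ring
  refine ⟨hmain, ?_, ?_⟩
  · rw [Aw_succ, hmain, hawt]; ring
  · rw [Nw_succ, hnwt]

end Complete

/-! the forward map -/

def fgam (n : ℕ) (ω : Fin n × Bool → Option Bool) (s : ℕ) : Fin (n+1) × Bool → Bool :=
  fun p => (oc n ω (p.1.val + s) p.2).getD false

lemma cE_getD (v : Option Bool) : (if (v.getD false) = true then (1:ℤ) else -1) = cE v := by
  rcases v with _ | b
  · simp [cE]
  · cases b <;> simp [cE]

lemma cB_getD (v : Option Bool) : (if (v.getD false) = true then (1:ℤ) else 0) = cB v := by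
  rcases v with _ | b
  · simp [cB]
  · cases b <;> simp [cB]

lemma cWN_getD (v : Option Bool) :
    (if (v.getD false) = false then (1:ℤ) else 0) = cW v + cN v := by
  rcases v with _ | b
  · simp [cW, cN]
  · cases b <;> simp [cW, cN]

lemma cBWN_one (v : Option Bool) : cB v + cW v + cN v = 1 := by
  rcases v with _ | b
  · simp [cB, cW, cN]
  · cases b <;> simp [cB, cW, cN]

lemma awt_mod (t : ℕ) : awt n ω t = awt n ω (t % (n+1)) := by
  unfold awt; rw [oc_mod (t := t), oc_mod (t := t)]

lemma et_fgam (s x : ℕ) : et n (fgam n ω s) x = awt n ω (x + s) := by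
  unfold et eg fgam awt
  simp only
  rw [cE_getD, cE_getD]
  have h : (x % (n+1) + s) % (n+1) = (x + s) % (n+1) := Nat.mod_add_mod x (n+1) s
  rw [show oc n ω (x % (n+1) + s) true = oc n ω (x + s) true by
        rw [oc_mod (t := x % (n+1) + s), h, ← oc_mod],
      show oc n ω (x % (n+1) + s) false = oc n ω (x + s) false by
        rw [oc_mod (t := x % (n+1) + s), h, ← oc_mod]]

lemma Sh_fgam (s x : ℕ) : Sh n (fgam n ω s) x = Aw n ω (s + x) - Aw n ω s := by
  unfold Sh
  have h1 : ∑ t ∈ range x, et n (fgam n ω s) t = ∑ t ∈ range x, awt n ω (s + t) :=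
    Finset.sum_congr rfl (fun t _ => by rw [et_fgam, Nat.add_comm])
  have h2 : Aw n ω (s + x) = Aw n ω s + ∑ t ∈ range x, awt n ω (s + t) :=
    Finset.sum_range_add _ _ _
  omega

lemma Aw_add_period (x : ℕ) : Aw n ω (x + (n+1)) = Aw n ω x + Aw n ω (n+1) := by
  have h2 : Aw n ω (x + (n+1)) = Aw n ω x + ∑ t ∈ range (n+1), awt n ω (x + t) :=
    Finset.sum_range_add _ _ _
  have h3 : ∑ t ∈ range (n+1), awt n ω (x + t) = ∑ t ∈ range (n+1), awt n ω (t + x) :=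
    Finset.sum_congr rfl (fun t _ => by rw [Nat.add_comm])
  rw [h2, h3, psum_shift_full awt_period x]
  rfl

lemma Nw_add_period (x : ℕ) : Nw n ω (x + (n+1)) = Nw n ω x + Nw n ω (n+1) := by
  have h2 : Nw n ω (x + (n+1)) = Nw n ω x + ∑ t ∈ range (n+1), nwt n ω (x + t) :=
    Finset.sum_range_add _ _ _
  have h3 : ∑ t ∈ range (n+1), nwt n ω (x + t) = ∑ t ∈ range (n+1), nwt n ω (t + x) :=
    Finset.sum_congr rfl (fun t _ => by rw [Nat.add_comm])
  rw [h2, h3, psum_shift_full nwt_period x]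
  rfl

section Fwd

variable {ℓ k m : ℕ} (hC : IsComplete3 n ω) (hneut : neutCount n ω = ℓ)

lemma hN_fgam (hC : IsComplete3 n ω) (hneut : neutCount n ω = ℓ) (s : ℕ) :
    Sh n (fgam n ω s) (n+1) = -2 * ((ℓ:ℤ)+1) := by
  rw [Sh_fgam, Aw_add_period, Aw_N hC hneut]
  ring

lemma fwd_neut_mem_Dset (hC : IsComplete3 n ω) (hneut : neutCount n ω = ℓ) {s : ℕ}
    {c : Fin (n+1)} (hcn : oc n ω (c.val + s) true = none) :
    c ∈ Dset n ℓ (fgam n ω s) := by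
  set γ := fgam n ω s with hγ
  have hN : Sh n γ (n+1) = -2 * ((ℓ:ℤ)+1) := hN_fgam hC hneut s
  set q := c.val + s with hq
  obtain ⟨hw1, hw2, hw3⟩ := neut_wall hC hneut hcn
  have hSh1 : Sh n γ (c.val + 1) = -2 * Nw n ω q - 2 - Aw n ω s := by
    rw [Sh_fgam, show s + (c.val + 1) = q + 1 from by omega, hw2]
  have hne : ∀ j ≤ c.val, Sh n γ j ≠ Sh n γ (c.val + 1) := by
    intro j hj
    have h1 : Sh n γ j = Aw n ω (s + j) - Aw n ω s := Sh_fgam s j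
    have h2 := Aw_ge hC hneut (s + j)
    have h3 : Nw n ω (s + j) ≤ Nw n ω q := Nw_mono (by omega)
    omega
  -- dmin bound
  obtain ⟨x₀, hx₀, hx₀2⟩ := dmin_exists γ
  have hdm : dmin n γ ≥ -2 * Nw n ω s - 2 * ((ℓ:ℤ)+1) - Aw n ω s := by
    rw [← hx₀2, Sh_fgam]
    have h2 := Aw_ge hC hneut (s + x₀)
    have h3 : Nw n ω (s + x₀) ≤ Nw n ω (s + (n+1)) := Nw_mono (by omega)
    have h4 : Nw n ω (s + (n+1)) = Nw n ω s + ((ℓ:ℤ)+1) := by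
      rw [Nw_add_period, Nw_N hneut]
    omega
  have hub : Sh n γ (c.val + 1) ≤ -2 * Nw n ω s - 2 - Aw n ω s := by
    have h3 : Nw n ω s ≤ Nw n ω q := Nw_mono (by omega)
    omega
  have hlb : dmin n γ ≤ Sh n γ (c.val + 1) := dmin_le γ (by omega)
  have heven : Even (Sh n γ (c.val + 1) - dmin n γ) := (Sh_even γ _).sub (dmin_even γ)
  obtain ⟨a, ha⟩ := heven
  have ha0 : 0 ≤ a := by omega
  have haℓ : a ≤ (ℓ:ℤ) := by omega
  rw [Dset, Finset.mem_filter]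
  refine ⟨Finset.mem_univ c, a.toNat, ?_, ?_, ?_⟩
  · omega
  · rw [Ez_eq_Sh γ (by omega : c.val + 1 ≤ n+1)]
    have : ((a.toNat : ℤ)) = a := Int.toNat_of_nonneg ha0
    rw [this]
    omega
  · intro j hj
    rw [Ez_eq_Sh γ (by omega : j ≤ n+1)]
    have : ((a.toNat : ℤ)) = a := Int.toNat_of_nonneg ha0
    rw [this]
    have := hne j hj
    omega

lemma fwd_Dset_eq (hC : IsComplete3 n ω) (hneut : neutCount n ω = ℓ) (s : ℕ) :
    Dset n ℓ (fgam n ω s)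
      = (Finset.univ : Finset (Fin (n+1))).filter
          (fun c => oc n ω (c.val + s) true = none) := by
  have hN : Sh n (fgam n ω s) (n+1) = -2 * ((ℓ:ℤ)+1) := hN_fgam hC hneut s
  have hsub : (Finset.univ : Finset (Fin (n+1))).filter
      (fun c => oc n ω (c.val + s) true = none) ⊆ Dset n ℓ (fgam n ω s) := by
    intro c hc
    rw [Finset.mem_filter] at hc
    exact fwd_neut_mem_Dset hC hneut hc.2
  have hcard : (((Finset.univ : Finset (Fin (n+1))).filter
      (fun c => oc n ω (c.val + s) true = none)).card : ℤ) = (ℓ:ℤ) + 1 := by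
    rw [card1_eq_sum (fun c : Fin (n+1) => oc n ω (c.val + s) true = none)
      (fun t => nwt n ω (t + s)) (fun c => by unfold nwt cN; rfl)]
    rw [psum_shift_full (fun t => nwt_period t) s]
    have : ∑ t ∈ range (n+1), nwt n ω t = Nw n ω (n+1) := rfl
    rw [this, Nw_N hneut]
  have hcard2 : (Dset n ℓ (fgam n ω s)).card = ℓ + 1 := Dset_card hN
  symm
  apply Finset.eq_of_subset_of_card_le hsub
  rw [hcard2]
  omega


lemma rc_true_cast (s : ℕ) (r : Bool) :
    (rowCount n (fgam n ω s) r true : ℤ) = ∑ t ∈ range (n+1), cB (oc n ω t r) := by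
  unfold rowCount
  rw [card1_eq_sum (fun c : Fin (n+1) => fgam n ω s (c, r) = true)
    (fun t => cB (oc n ω (t + s) r)) (fun c => (cB_getD _).symm)]
  exact psum_shift_full (a := fun t => cB (oc n ω t r)) (fun t => by rw [oc_period]) s

lemma rc_false_cast (s : ℕ) (r : Bool) :
    (rowCount n (fgam n ω s) r false : ℤ)
      = ∑ t ∈ range (n+1), (cW (oc n ω t r) + cN (oc n ω t r)) := by
  unfold rowCount
  rw [card1_eq_sum (fun c : Fin (n+1) => fgam n ω s (c, r) = false)
    (fun t => cW (oc n ω (t + s) r) + cN (oc n ω (t + s) r)) (fun c => (cWN_getD _).symm)]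
  exact psum_shift_full (a := fun t => cW (oc n ω t r) + cN (oc n ω t r))
    (fun t => by rw [oc_period]) s

lemma bot_counts (hC : IsComplete3 n ω) (hneut : neutCount n ω = ℓ)
    (htB : topB n ω = k) (htW : topW n ω = m) (hkm : k + ℓ + m = n) :
    ∑ t ∈ range n, cB (oc n ω t false) = (m:ℤ)
      ∧ ∑ t ∈ range n, cW (oc n ω t false) = (k:ℤ) := by
  have e1 : ∑ t ∈ range n, (cB (oc n ω t false) + cW (oc n ω t false) + cN (oc n ω t false))
      = (n:ℤ) := by
    rw [Finset.sum_congr rfl (fun t _ => cBWN_one (oc n ω t false))]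
    simp
  have e2 : ∑ t ∈ range n, cN (oc n ω t false) = (ℓ:ℤ) := by
    have hpt : ∀ t ∈ range n, cN (oc n ω t false) = nwt n ω t := by
      intro t ht
      rw [Finset.mem_range] at ht
      unfold nwt cN
      rw [oc_eq_self ht, oc_eq_self ht]
      have := hC.1 ⟨t, ht⟩
      by_cases h : ω (⟨t, ht⟩, false) = none
      · rw [if_pos h, if_pos (this.mpr h)]
      · rw [if_neg h, if_neg (fun hh => h (this.mp hh))]
    rw [Finset.sum_congr rfl hpt]
    have : ∑ t ∈ range n, nwt n ω t = Nw n ω n := rfl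
    rw [this, ← neutCount_cast, hneut]
  have e3 : (topB n ω : ℤ) + ∑ t ∈ range n, cB (oc n ω t false)
      = (topW n ω : ℤ) + ∑ t ∈ range n, cW (oc n ω t false) := by
    have hb : (bC n ω n : ℤ) = (topB n ω : ℤ) + ∑ t ∈ range n, cB (oc n ω t false) := by
      rw [bC_cast le_rfl, topB_cast]
      unfold Bw bwt
      rw [Finset.sum_add_distrib]
    have hw : (wC n ω n : ℤ) = (topW n ω : ℤ) + ∑ t ∈ range n, cW (oc n ω t false) := by
      rw [wC_cast le_rfl, topW_cast]
      unfold Ww wwt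
      rw [Finset.sum_add_distrib]
    rw [← hb, ← hw, hC.2.1]
  have e4 : ∑ t ∈ range n, cB (oc n ω t true) = (k:ℤ) := by rw [← topB_cast, htB]
  have e5 : ∑ t ∈ range n, cW (oc n ω t true) = (m:ℤ) := by rw [← topW_cast, htW]
  rw [topB_cast, topW_cast, e4, e5] at e3
  rw [Finset.sum_add_distrib, Finset.sum_add_distrib, e2] at e1
  have hn : (k:ℤ) + ℓ + m = (n:ℤ) := by exact_mod_cast congrArg (Nat.cast : ℕ → ℤ) hkm
  constructor <;> linarith

lemma fgam_rowCounts (hC : IsComplete3 n ω) (hneut : neutCount n ω = ℓ)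
    (htB : topB n ω = k) (htW : topW n ω = m) (hkm : k + ℓ + m = n) (s : ℕ) :
    rowCount n (fgam n ω s) true true = k ∧ rowCount n (fgam n ω s) true false = m + ℓ + 1 ∧
    rowCount n (fgam n ω s) false true = m
      ∧ rowCount n (fgam n ω s) false false = k + ℓ + 1 := by
  obtain ⟨hbB, hbW⟩ := bot_counts hC hneut htB htW hkm
  have hNtop : ∑ t ∈ range (n+1), cN (oc n ω t true) = (ℓ:ℤ) + 1 := by
    have : ∑ t ∈ range (n+1), cN (oc n ω t true) = Nw n ω (n+1) := rfl
    rw [this, Nw_N hneut]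
  have hNbot : ∑ t ∈ range (n+1), cN (oc n ω t false) = (ℓ:ℤ) + 1 := by
    rw [Finset.sum_range_succ, oc_last]
    have e2 : ∑ t ∈ range n, cN (oc n ω t false) = (ℓ:ℤ) := by
      have hpt : ∀ t ∈ range n, cN (oc n ω t false) = nwt n ω t := by
        intro t ht
        rw [Finset.mem_range] at ht
        unfold nwt cN
        rw [oc_eq_self ht, oc_eq_self ht]
        have := hC.1 ⟨t, ht⟩
        by_cases h : ω (⟨t, ht⟩, false) = none
        · rw [if_pos h, if_pos (this.mpr h)]
        · rw [if_neg h, if_neg (fun hh => h (this.mp hh))]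
      rw [Finset.sum_congr rfl hpt]
      have : ∑ t ∈ range n, nwt n ω t = Nw n ω n := rfl
      rw [this, ← neutCount_cast, hneut]
    rw [e2]
    simp [cN]
  refine ⟨?_, ?_, ?_, ?_⟩
  · have : (rowCount n (fgam n ω s) true true : ℤ) = (k:ℤ) := by
      rw [rc_true_cast, Finset.sum_range_succ, oc_last, ← topB_cast, htB]
      simp [cB]
    exact_mod_cast this
  · have : (rowCount n (fgam n ω s) true false : ℤ) = ((m + ℓ + 1 : ℕ) : ℤ) := by
      rw [rc_false_cast, Finset.sum_add_distrib, hNtop, Finset.sum_range_succ, oc_last,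
        ← topW_cast, htW]
      simp [cW]
      push_cast
      ring
    exact_mod_cast this
  · have : (rowCount n (fgam n ω s) false true : ℤ) = (m:ℤ) := by
      rw [rc_true_cast, Finset.sum_range_succ, oc_last, hbB]
      simp [cB]
    exact_mod_cast this
  · have : (rowCount n (fgam n ω s) false false : ℤ) = ((k + ℓ + 1 : ℕ) : ℤ) := by
      rw [rc_false_cast, Finset.sum_add_distrib, hNbot, Finset.sum_range_succ, oc_last, hbW]
      simp [cW]
      push_cast
      ring
    exact_mod_cast this

end Fwd

/-! the backward map -/

def rotc (n : ℕ) (s c : ℕ) : Fin (n+1) := ⟨(c + s) % (n+1), Nat.mod_lt _ (Nat.succ_pos n)⟩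

def bom (n ℓ : ℕ) (γ : Fin (n+1) × Bool → Bool) (s : ℕ) : Fin n × Bool → Option Bool :=
  fun p => if rotc n s p.1.val ∈ Dset n ℓ γ then none else some (γ (rotc n s p.1.val, p.2))

section Bwd

variable {ℓ k m : ℕ} {γ : Fin (n+1) × Bool → Bool}

lemma hN_of_rc (h1 : rowCount n γ true true = k) (h2 : rowCount n γ true false = m + ℓ + 1)
    (h3 : rowCount n γ false true = m) (h4 : rowCount n γ false false = k + ℓ + 1) :
    Sh n γ (n+1) = -2 * ((ℓ:ℤ)+1) := by
  have hrow : ∀ r : Bool, (rowCount n γ r true : ℤ) - (rowCount n γ r false : ℤ)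
      = ∑ c : Fin (n+1), (if γ (c, r) = true then (1:ℤ) else -1) := by
    intro r
    unfold rowCount
    rw [Finset.card_filter, Finset.card_filter]
    push_cast
    rw [← Finset.sum_sub_distrib]
    refine Finset.sum_congr rfl (fun c _ => ?_)
    cases hcr : γ (c, r) <;> simp [hcr]
  have hEz : Ez n γ (n+1) = ∑ c : Fin (n+1), eg n γ c := by
    rw [Ez_eq_sum]
    exact Finset.sum_congr rfl (fun c _ => by rw [if_pos c.isLt])
  have hsplit : ∑ c : Fin (n+1), eg n γ c
      = ∑ c : Fin (n+1), (if γ (c, true) = true then (1:ℤ) else -1)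
        + ∑ c : Fin (n+1), (if γ (c, false) = true then (1:ℤ) else -1) := by
    rw [← Finset.sum_add_distrib]
    rfl
  have := hrow true
  have := hrow false
  rw [← Ez_eq_Sh γ le_rfl, hEz, hsplit, h1, h2, h3, h4] at *
  push_cast at *
  omega

lemma et_rotc (s t : ℕ) : et n γ (t + s) = eg n γ (rotc n s t) := rfl

lemma gstep_rotc (s t : ℕ) :
    gstep n ℓ γ (t + s) = if rotc n s t ∈ Dset n ℓ γ then 1 else 0 := rfl

lemma oc_bom {t : ℕ} (ht : t < n) (s : ℕ) (r : Bool) :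
    oc n (bom n ℓ γ s) t r
      = if rotc n s t ∈ Dset n ℓ γ then none else some (γ (rotc n s t, r)) := by
  rw [oc_eq_self ht]
  rfl

lemma Ht_ge (hN : Sh n γ (n+1) = -2 * ((ℓ:ℤ)+1)) (y : ℕ) :
    dmin n γ + 2*((ℓ:ℤ)+1) ≤ Ht n ℓ γ y := by
  rw [Ht_mod hN y]
  exact Ht_min hN (le_of_lt (Nat.mod_lt _ (Nat.succ_pos n)))

lemma bwt_wwt_bom (hN : Sh n γ (n+1) = -2 * ((ℓ:ℤ)+1)) {t : ℕ} (ht : t < n) (s : ℕ) :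
    bwt n (bom n ℓ γ s) t - wwt n (bom n ℓ γ s) t
      = et n γ (t + s) + 2 * gstep n ℓ γ (t + s) := by
  unfold bwt wwt
  rw [oc_bom ht, oc_bom ht, et_rotc, gstep_rotc]
  by_cases hD : rotc n s t ∈ Dset n ℓ γ
  · obtain ⟨hw1, hw2⟩ := Dset_white hN hD
    simp [hD, eg, hw1, hw2, cB, cW]
  · cases h1 : γ (rotc n s t, true) <;> cases h2 : γ (rotc n s t, false) <;>
      simp [hD, eg, h1, h2, cB, cW]

lemma bC_wC_bom (hN : Sh n γ (n+1) = -2 * ((ℓ:ℤ)+1)) {x : ℕ} (hx : x ≤ n) (s : ℕ) :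
    (bC n (bom n ℓ γ s) x : ℤ) - (wC n (bom n ℓ γ s) x : ℤ)
      = Ht n ℓ γ (s + x) - Ht n ℓ γ s := by
  rw [bC_cast hx, wC_cast hx]
  unfold Bw Ww
  rw [← Finset.sum_sub_distrib]
  have h1 : ∀ t ∈ range x, bwt n (bom n ℓ γ s) t - wwt n (bom n ℓ γ s) t
      = et n γ (t + s) + 2 * gstep n ℓ γ (t + s) := by
    intro t ht
    rw [Finset.mem_range] at ht
    exact bwt_wwt_bom hN (by omega) s
  rw [Finset.sum_congr rfl h1, Finset.sum_add_distrib]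
  have h2 : Sh n γ (s + x) = Sh n γ s + ∑ t ∈ range x, et n γ (s + t) :=
    Finset.sum_range_add _ _ _
  have h3 : GS n ℓ γ (s + x) = GS n ℓ γ s + ∑ t ∈ range x, gstep n ℓ γ (s + t) :=
    Finset.sum_range_add _ _ _
  have h4 : ∑ t ∈ range x, et n γ (t + s) = ∑ t ∈ range x, et n γ (s + t) :=
    Finset.sum_congr rfl (fun t _ => by rw [Nat.add_comm])
  have h5 : ∑ t ∈ range x, gstep n ℓ γ (t + s) = ∑ t ∈ range x, gstep n ℓ γ (s + t) :=
    Finset.sum_congr rfl (fun t _ => by rw [Nat.add_comm])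
  rw [← Finset.mul_sum, h4, h5]
  unfold Ht
  omega


lemma rotc_zero (c : Fin (n+1)) : rotc n 0 c.val = c := by
  ext
  simp [rotc, Nat.mod_eq_of_lt c.isLt]

lemma rotc_period (s t : ℕ) : rotc n s (t + (n+1)) = rotc n s t := by
  ext
  show (t + (n+1) + s) % (n+1) = (t + s) % (n+1)
  rw [show t + (n+1) + s = (t + s) + (n+1) from by omega, Nat.add_mod_right]

lemma bom_none_iff (s : ℕ) (c : Fin n) (r : Bool) :
    bom n ℓ γ s (c, r) = none ↔ rotc n s c.val ∈ Dset n ℓ γ := by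
  unfold bom
  by_cases hD : rotc n s c.val ∈ Dset n ℓ γ <;> simp [hD]

section atW
variable {i₀ : ℕ}

lemma rotc_last (hN : Sh n γ (n+1) = -2 * ((ℓ:ℤ)+1)) (hi₀ : i₀ ≤ ℓ) :
    rotc n (Wf n γ i₀) n = ⟨Wf n γ i₀ - 1,
      by obtain ⟨_, h2, _, h4⟩ := Wf_spec hN hi₀; omega⟩
    ∧ rotc n (Wf n γ i₀) n ∈ Dset n ℓ γ := by
  obtain ⟨_, h2, _, h4⟩ := Wf_spec hN hi₀
  have hval : (n + Wf n γ i₀) % (n+1) = Wf n γ i₀ - 1 := by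
    rw [show n + Wf n γ i₀ = (Wf n γ i₀ - 1) + (n+1) from by omega, Nat.add_mod_right,
      Nat.mod_eq_of_lt (by omega)]
  have h1 : rotc n (Wf n γ i₀) n = ⟨Wf n γ i₀ - 1, by omega⟩ := by
    ext; exact hval
  refine ⟨h1, ?_⟩
  rw [h1, Dset_iff hN]
  exact ⟨i₀, hi₀, by simp; omega⟩

lemma bom_complete (hN : Sh n γ (n+1) = -2 * ((ℓ:ℤ)+1)) (hi₀ : i₀ ≤ ℓ) :
    IsComplete3 n (bom n ℓ γ (Wf n γ i₀)) := by
  set s := Wf n γ i₀ with hs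
  obtain ⟨hsh, hsle, _, hspos⟩ := Wf_spec hN hi₀
  have hHts : Ht n ℓ γ s = dmin n γ + 2*((ℓ:ℤ)+1) := Ht_at_W hN hi₀
  refine ⟨?_, ?_, ?_, ?_⟩
  · intro c
    rw [bom_none_iff, bom_none_iff]
  · have h1 := bC_wC_bom hN (le_refl n) s
    have h2 : Ht n ℓ γ (s + n) = dmin n γ + 2*((ℓ:ℤ)+1) := by
      rw [show s + n = (s - 1) + (n+1) from by omega, Ht_add_period hN,
        show s - 1 = Wf n γ i₀ - 1 from rfl, Ht_at_W_pred hN hi₀]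
    omega
  · intro x hx
    have h1 := bC_wC_bom hN hx s
    have h2 := Ht_ge hN (s + x)
    omega
  · intro c hc
    rw [bom_none_iff] at hc
    rw [Dset_iff hN] at hc
    obtain ⟨i, hi, hWi⟩ := hc
    have h1 := bC_wC_bom hN (le_of_lt c.isLt) s
    have h2 : Ht n ℓ γ (s + c.val) = dmin n γ + 2*((ℓ:ℤ)+1) := by
      rw [Ht_mod hN (s + c.val)]
      have hval : (s + c.val) % (n+1) = Wf n γ i - 1 := by
        have : (c.val + s) % (n+1) + 1 = Wf n γ i := hWi
        rw [Nat.add_comm s c.val]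
        omega
      rw [hval, Ht_at_W_pred hN hi]
    omega

lemma bom_neutCount (hN : Sh n γ (n+1) = -2 * ((ℓ:ℤ)+1)) (hi₀ : i₀ ≤ ℓ) :
    neutCount n (bom n ℓ γ (Wf n γ i₀)) = ℓ := by
  set s := Wf n γ i₀ with hs
  obtain ⟨hsh, hsle, _, hspos⟩ := Wf_spec hN hi₀
  have hcast : (neutCount n (bom n ℓ γ s) : ℤ) = Nw n (bom n ℓ γ s) n := neutCount_cast
  have hpt : ∀ t ∈ range n, nwt n (bom n ℓ γ s) t = gstep n ℓ γ (t + s) := by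
    intro t ht
    rw [Finset.mem_range] at ht
    unfold nwt
    rw [oc_bom ht, gstep_rotc]
    by_cases hD : rotc n s t ∈ Dset n ℓ γ <;> simp [hD, cN]
  have hsum : Nw n (bom n ℓ γ s) n = ∑ t ∈ range n, gstep n ℓ γ (s + t) := by
    unfold Nw
    rw [Finset.sum_congr rfl hpt]
    exact Finset.sum_congr rfl (fun t _ => by rw [Nat.add_comm])
  have h2 : GS n ℓ γ (s + n) = GS n ℓ γ s + ∑ t ∈ range n, gstep n ℓ γ (s + t) :=
    Finset.sum_range_add _ _ _
  have h3 : GS n ℓ γ (s + n) = GS n ℓ γ (s - 1) + ((ℓ:ℤ) + 1) := by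
    rw [show s + n = (s - 1) + (n+1) from by omega, GS_add_period, GS_N hN]
  have h4 : GS n ℓ γ s = GS n ℓ γ (s - 1) + 1 := by
    have h5 := GS_succ (n := n) (ℓ := ℓ) (γ := γ) (s - 1)
    have h6 : gstep n ℓ γ (s - 1) = 1 := by
      unfold gstep
      rw [if_pos]
      have hval : (s - 1) % (n+1) = s - 1 := Nat.mod_eq_of_lt (by omega)
      have : (⟨(s-1) % (n+1), Nat.mod_lt _ (Nat.succ_pos n)⟩ : Fin (n+1))
          = ⟨s - 1, by omega⟩ := by ext; exact hval
      rw [this, Dset_iff hN]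
      exact ⟨i₀, hi₀, by simp; omega⟩
    rw [show s - 1 + 1 = s from by omega] at h5
    omega
  omega


lemma gstep_sum (hN : Sh n γ (n+1) = -2 * ((ℓ:ℤ)+1)) (hi₀ : i₀ ≤ ℓ) :
    ∑ t ∈ range n, gstep n ℓ γ (t + Wf n γ i₀) = (ℓ:ℤ) := by
  set s := Wf n γ i₀ with hs
  obtain ⟨hsh, hsle, _, hspos⟩ := Wf_spec hN hi₀
  have h0 : ∑ t ∈ range n, gstep n ℓ γ (t + s) = ∑ t ∈ range n, gstep n ℓ γ (s + t) :=
    Finset.sum_congr rfl (fun t _ => by rw [Nat.add_comm])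
  have h2 : GS n ℓ γ (s + n) = GS n ℓ γ s + ∑ t ∈ range n, gstep n ℓ γ (s + t) :=
    Finset.sum_range_add _ _ _
  have h3 : GS n ℓ γ (s + n) = GS n ℓ γ (s - 1) + ((ℓ:ℤ) + 1) := by
    rw [show s + n = (s - 1) + (n+1) from by omega, GS_add_period, GS_N hN]
  have h4 : GS n ℓ γ s = GS n ℓ γ (s - 1) + 1 := by
    have h5 := GS_succ (n := n) (ℓ := ℓ) (γ := γ) (s - 1)
    have h6 : gstep n ℓ γ (s - 1) = 1 := by
      unfold gstep
      rw [if_pos]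
      have : (⟨(s-1) % (n+1), Nat.mod_lt _ (Nat.succ_pos n)⟩ : Fin (n+1))
          = ⟨s - 1, by omega⟩ := by ext; exact Nat.mod_eq_of_lt (by omega)
      rw [this, Dset_iff hN]
      exact ⟨i₀, hi₀, by simp; omega⟩
    rw [show s - 1 + 1 = s from by omega] at h5
    omega
  omega

lemma bom_topB (hN : Sh n γ (n+1) = -2 * ((ℓ:ℤ)+1)) (hi₀ : i₀ ≤ ℓ)
    (h1 : rowCount n γ true true = k) : topB n (bom n ℓ γ (Wf n γ i₀)) = k := by
  set s := Wf n γ i₀ with hs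
  obtain ⟨hsh, hsle, _, hspos⟩ := Wf_spec hN hi₀
  set bt : ℕ → ℤ := fun u => if γ (rotc n 0 u, true) = true then 1 else 0 with hbt
  have hbt_per : ∀ u, bt (u + (n+1)) = bt u := fun u => by
    simp only [hbt]; rw [rotc_period]
  have hpt : ∀ t ∈ range n, cB (oc n (bom n ℓ γ s) t true) = bt (t + s) := by
    intro t ht
    rw [Finset.mem_range] at ht
    rw [oc_bom ht]
    have hr : rotc n 0 (t + s) = rotc n s t := rfl
    simp only [hbt, hr]
    by_cases hD : rotc n s t ∈ Dset n ℓ γ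
    · obtain ⟨hw1, _⟩ := Dset_white hN hD
      simp [hD, hw1, cB]
    · cases hb : γ (rotc n s t, true) <;> simp [hD, hb, cB]
  have hfull : ∑ t ∈ range (n+1), bt (t + s) = ∑ t ∈ range (n+1), bt t :=
    psum_shift_full hbt_per s
  have hrc_cast : (rowCount n γ true true : ℤ) = ∑ t ∈ range (n+1), bt t := by
    unfold rowCount
    exact card1_eq_sum _ bt (fun c => by simp only [hbt, rotc_zero])
  have hlast : bt (n + s) = 0 := by
    obtain ⟨hrv, hrD⟩ := rotc_last hN hi₀
    have hw := (Dset_white hN hrD).1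
    have hr : rotc n 0 (n + s) = rotc n s n := rfl
    simp only [hbt, hr, hw]
    simp
    exact hw
  have hsucc : ∑ t ∈ range (n+1), bt (t + s)
      = ∑ t ∈ range n, bt (t + s) + bt (n + s) := Finset.sum_range_succ _ _
  have htb : (topB n (bom n ℓ γ s) : ℤ) = ∑ t ∈ range n, cB (oc n (bom n ℓ γ s) t true) :=
    topB_cast
  rw [Finset.sum_congr rfl hpt] at htb
  have : (topB n (bom n ℓ γ s) : ℤ) = (k : ℤ) := by
    rw [htb]
    rw [h1] at hrc_cast
    omega
  exact_mod_cast this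

lemma bom_topW (hN : Sh n γ (n+1) = -2 * ((ℓ:ℤ)+1)) (hi₀ : i₀ ≤ ℓ)
    (h2 : rowCount n γ true false = m + ℓ + 1) : topW n (bom n ℓ γ (Wf n γ i₀)) = m := by
  set s := Wf n γ i₀ with hs
  obtain ⟨hsh, hsle, _, hspos⟩ := Wf_spec hN hi₀
  set wt : ℕ → ℤ := fun u => if γ (rotc n 0 u, true) = false then 1 else 0 with hwt
  have hwt_per : ∀ u, wt (u + (n+1)) = wt u := fun u => by
    simp only [hwt]; rw [rotc_period]
  have hpt : ∀ t ∈ range n, cW (oc n (bom n ℓ γ s) t true)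
      = wt (t + s) - gstep n ℓ γ (t + s) := by
    intro t ht
    rw [Finset.mem_range] at ht
    rw [oc_bom ht, gstep_rotc]
    have hr : rotc n 0 (t + s) = rotc n s t := rfl
    simp only [hwt, hr]
    by_cases hD : rotc n s t ∈ Dset n ℓ γ
    · obtain ⟨hw1, _⟩ := Dset_white hN hD
      simp [hD, hw1, cW]
    · cases hb : γ (rotc n s t, true) <;> simp [hD, hb, cW]
  have hfull : ∑ t ∈ range (n+1), wt (t + s) = ∑ t ∈ range (n+1), wt t :=
    psum_shift_full hwt_per s
  have hrc_cast : (rowCount n γ true false : ℤ) = ∑ t ∈ range (n+1), wt t := by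
    unfold rowCount
    exact card1_eq_sum _ wt (fun c => by simp only [hwt, rotc_zero])
  have hlast : wt (n + s) = 1 := by
    obtain ⟨hrv, hrD⟩ := rotc_last hN hi₀
    have hw := (Dset_white hN hrD).1
    have hr : rotc n 0 (n + s) = rotc n s n := rfl
    simp only [hwt, hr, hw]
    simp
    exact hw
  have hsucc : ∑ t ∈ range (n+1), wt (t + s)
      = ∑ t ∈ range n, wt (t + s) + wt (n + s) := Finset.sum_range_succ _ _
  have htw : (topW n (bom n ℓ γ s) : ℤ) = ∑ t ∈ range n, cW (oc n (bom n ℓ γ s) t true) :=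
    topW_cast
  rw [Finset.sum_congr rfl hpt, Finset.sum_sub_distrib] at htw
  have hg := gstep_sum hN hi₀
  rw [← hs] at hg
  have : (topW n (bom n ℓ γ s) : ℤ) = (m : ℤ) := by
    rw [htw, hg]
    rw [h2] at hrc_cast
    push_cast at hrc_cast ⊢
    omega
  exact_mod_cast this

end atW
end Bwd

section RT
variable {ℓ : ℕ} {γ : Fin (n+1) × Bool → Bool} {ω : Fin n × Bool → Option Bool}

lemma fgam_bom (hN : Sh n γ (n+1) = -2 * ((ℓ:ℤ)+1)) {j : Fin (n+1)} (hj : j ∈ Dset n ℓ γ) :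
    fgam n (bom n ℓ γ (j.val + 1)) (n - j.val) = γ := by
  funext p
  rcases p with ⟨c, r⟩
  show (oc n (bom n ℓ γ (j.val+1)) (c.val + (n - j.val)) r).getD false = γ (c, r)
  rw [oc_mod]
  set x := (c.val + (n - j.val)) % (n+1) with hxdef
  have hjn : j.val ≤ n := by omega
  have hxlt : x < n + 1 := Nat.mod_lt _ (Nat.succ_pos n)
  have hkey : (x + (j.val + 1)) % (n+1) = c.val := by
    rw [hxdef, Nat.mod_add_mod,
      show c.val + (n - j.val) + (j.val + 1) = c.val + (n+1) from by omega,
      Nat.add_mod_right]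
    exact Nat.mod_eq_of_lt c.isLt
  by_cases hxn : x = n
  · have hcj : c = j := by
      have h2 : (x + (j.val+1)) % (n+1) = j.val := by
        rw [hxn, show n + (j.val + 1) = j.val + (n+1) from by omega, Nat.add_mod_right]
        exact Nat.mod_eq_of_lt j.isLt
      apply Fin.ext
      omega
    rw [hxn, oc_last]
    obtain ⟨hw1, hw2⟩ := Dset_white hN hj
    rw [hcj]
    cases r
    · rw [hw2]; rfl
    · rw [hw1]; rfl
  · have hxn' : x < n := by omega
    rw [oc_eq_self hxn']
    show (bom n ℓ γ (j.val+1) (⟨x, hxn'⟩, r)).getD false = γ (c, r)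
    unfold bom
    simp only
    have hrc : rotc n (j.val+1) x = c := Fin.ext hkey
    rw [hrc]
    by_cases hD : c ∈ Dset n ℓ γ
    · obtain ⟨hw1, hw2⟩ := Dset_white hN hD
      rw [if_pos hD]
      cases r
      · rw [hw2]; rfl
      · rw [hw1]; rfl
    · rw [if_neg hD]
      rfl

lemma bom_fgam (hC : IsComplete3 n ω) (hneut : neutCount n ω = ℓ) {i : Fin (n+1)} :
    bom n ℓ (fgam n ω i.val) ((n - i.val) + 1) = ω := by
  funext p
  rcases p with ⟨c, r⟩
  unfold bom
  simp only
  have hsn : i.val ≤ n := by omega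
  have hDeq := fwd_Dset_eq hC hneut i.val
  have hmod : ∀ r' : Bool,
      oc n ω ((rotc n (n - i.val + 1) c.val).val + i.val) r' = oc n ω c.val r' := by
    intro r'
    rw [oc_mod]
    have hval : ((rotc n (n - i.val + 1) c.val).val + i.val) % (n+1) = c.val := by
      show ((c.val + (n - i.val + 1)) % (n+1) + i.val) % (n+1) = c.val
      rw [Nat.mod_add_mod,
        show c.val + (n - i.val + 1) + i.val = c.val + (n+1) from by omega,
        Nat.add_mod_right]
      exact Nat.mod_eq_of_lt (by omega : c.val < n + 1)
    rw [hval]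
  have hDmem : (rotc n (n - i.val + 1) c.val ∈ Dset n ℓ (fgam n ω i.val))
      ↔ oc n ω c.val true = none := by
    rw [hDeq, Finset.mem_filter]
    constructor
    · intro ⟨_, h2⟩
      rw [← hmod true]
      exact h2
    · intro h2
      exact ⟨Finset.mem_univ _, by rw [hmod true]; exact h2⟩
  by_cases hnone : oc n ω c.val true = none
  · rw [if_pos (hDmem.mpr hnone)]
    rw [oc_eq_self c.isLt] at hnone
    have hc : (⟨c.val, c.isLt⟩ : Fin n) = c := Fin.ext rfl
    rw [hc] at hnone
    cases r
    · exact ((hC.1 c).mp hnone).symm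
    · exact hnone.symm
  · rw [if_neg (fun hmem => hnone (hDmem.mp hmem))]
    have hval : fgam n ω i.val (rotc n (n - i.val + 1) c.val, r)
        = (oc n ω c.val r).getD false := by
      show (oc n ω ((rotc n (n - i.val + 1) c.val).val + i.val) r).getD false = _
      rw [hmod r]
    rw [hval]
    rw [oc_eq_self c.isLt] at hnone ⊢
    have hc : (⟨c.val, c.isLt⟩ : Fin n) = c := Fin.ext rfl
    rw [hc] at hnone ⊢
    rcases hv : ω (c, r) with _ | b
    · exfalso
      cases r
      · exact hnone ((hC.1 c).mpr hv)
      · exact hnone hv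
    · rfl

end RT

section Main
variable (n k ℓ m : ℕ)

abbrev Aty := {p : (Fin (n + 1) × Bool → Bool) × Fin (n + 1) //
    (rowCount n p.1 true true = k ∧ rowCount n p.1 true false = m + ℓ + 1 ∧
      rowCount n p.1 false true = m ∧ rowCount n p.1 false false = k + ℓ + 1) ∧
    p.2 ∈ Dset n ℓ p.1}

abbrev Bty := {q : (Fin n × Bool → Option Bool) × Fin (n + 1) //
    IsComplete3 n q.1 ∧ neutCount n q.1 = ℓ ∧ topB n q.1 = k ∧ topW n q.1 = m}

variable {n k ℓ m}

def AtoB (x : Aty n k ℓ m) : Bty n k ℓ m :=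
  ⟨(bom n ℓ x.1.1 (x.1.2.val + 1), ⟨n - x.1.2.val, Nat.lt_succ_of_le (Nat.sub_le _ _)⟩), by
    obtain ⟨⟨γ, j⟩, ⟨h1, h2, h3, h4⟩, hjD⟩ := x
    have hN : Sh n γ (n+1) = -2 * ((ℓ:ℤ)+1) := hN_of_rc h1 h2 h3 h4
    obtain ⟨i₀, hi₀, hjW⟩ := (Dset_iff hN j).mp hjD
    simp only
    rw [hjW]
    exact ⟨bom_complete hN hi₀, bom_neutCount hN hi₀, bom_topB hN hi₀ h1,
      bom_topW hN hi₀ h2⟩⟩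

def BtoA (h : k + ℓ + m = n) (y : Bty n k ℓ m) : Aty n k ℓ m :=
  ⟨(fgam n y.1.1 y.1.2.val, ⟨n - y.1.2.val, Nat.lt_succ_of_le (Nat.sub_le _ _)⟩), by
    obtain ⟨⟨ω, i⟩, hC, hneut, htB, htW⟩ := y
    simp only
    refine ⟨fgam_rowCounts hC hneut htB htW h i.val, ?_⟩
    apply fwd_neut_mem_Dset hC hneut
    show oc n ω ((n - i.val) + i.val) true = none
    rw [show (n - i.val) + i.val = n from by omega]
    exact oc_last true⟩

def mainEquiv (h : k + ℓ + m = n) : Aty n k ℓ m ≃ Bty n k ℓ m where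
  toFun := AtoB
  invFun := BtoA h
  left_inv := by
    rintro ⟨⟨γ, j⟩, ⟨h1, h2, h3, h4⟩, hjD⟩
    have hN : Sh n γ (n+1) = -2 * ((ℓ:ℤ)+1) := hN_of_rc h1 h2 h3 h4
    apply Subtype.ext
    show ((fgam n (bom n ℓ γ (j.val + 1)) (n - j.val), _) :
      (Fin (n + 1) × Bool → Bool) × Fin (n + 1)) = (γ, j)
    rw [Prod.mk.injEq]
    constructor
    · exact fgam_bom hN hjD
    · apply Fin.ext
      show n - (n - j.val) = j.val
      omega
  right_inv := by
    rintro ⟨⟨ω, i⟩, hC, hneut, htB, htW⟩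
    apply Subtype.ext
    show ((bom n ℓ (fgam n ω i.val) ((n - i.val) + 1), _) :
      (Fin n × Bool → Option Bool) × Fin (n + 1)) = (ω, i)
    rw [Prod.mk.injEq]
    constructor
    · exact bom_fgam hC hneut
    · apply Fin.ext
      show n - (n - i.val) = i.val
      omega


def boolFunEquivFinset (N : ℕ) : (Fin N → Bool) ≃ Finset (Fin N) where
  toFun f := Finset.univ.filter (fun i => f i = true)
  invFun s := fun i => if i ∈ s then true else false
  left_inv f := by
    funext i
    by_cases h : f i = true <;> simp [h]
  right_inv s := by
    ext i
    simp only [Finset.mem_filter, Finset.mem_univ, true_and]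
    by_cases h : i ∈ s <;> simp [h]

lemma card_boolFun_eq (N kk : ℕ) :
    Fintype.card {f : Fin N → Bool //
      ((Finset.univ : Finset (Fin N)).filter (fun i => f i = true)).card = kk}
      = Nat.choose N kk := by
  have e : {f : Fin N → Bool //
      ((Finset.univ : Finset (Fin N)).filter (fun i => f i = true)).card = kk}
      ≃ {s : Finset (Fin N) // s.card = kk} :=
    Equiv.subtypeEquiv (boolFunEquivFinset N) (fun f => Iff.rfl)
  rw [Fintype.card_congr e, Fintype.card_finset_len, Fintype.card_fin]

def rowsEquiv (n : ℕ) : (Fin (n+1) × Bool → Bool) ≃ (Fin (n+1) → Bool) × (Fin (n+1) → Bool)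
    where
  toFun γ := (fun i => γ (i, true), fun i => γ (i, false))
  invFun fg := fun p => if p.2 = true then fg.1 p.1 else fg.2 p.1
  left_inv γ := by
    funext p
    rcases p with ⟨i, r⟩
    cases r <;> simp
  right_inv fg := by
    apply Prod.ext <;> funext i <;> simp

lemma cardRC {n k ℓ m : ℕ} (h : k + ℓ + m = n) :
    (((Finset.univ : Finset (Fin (n+1) × Bool → Bool))).filter
      (fun γ => rowCount n γ true true = k ∧ rowCount n γ true false = m + ℓ + 1 ∧
        rowCount n γ false true = m ∧ rowCount n γ false false = k + ℓ + 1)).card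
      = Nat.choose (n+1) k * Nat.choose (n+1) m := by
  classical
  have hcompl : ∀ (γ : Fin (n+1) × Bool → Bool) (r : Bool),
      rowCount n γ r true + rowCount n γ r false = n + 1 := by
    intro γ r
    unfold rowCount
    have h2 := Finset.card_filter_add_card_filter_not
      (s := (Finset.univ : Finset (Fin (n+1)))) (p := fun i => γ (i, r) = true)
    simp only [Bool.not_eq_true] at h2
    rw [Finset.card_univ, Fintype.card_fin] at h2
    exact h2
  have hredu : ∀ γ ∈ (Finset.univ : Finset (Fin (n+1) × Bool → Bool)),
      (rowCount n γ true true = k ∧ rowCount n γ true false = m + ℓ + 1 ∧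
        rowCount n γ false true = m ∧ rowCount n γ false false = k + ℓ + 1)
      ↔ (rowCount n γ true true = k ∧ rowCount n γ false true = m) := by
    intro γ _
    have h1 := hcompl γ true
    have h2 := hcompl γ false
    constructor
    · rintro ⟨a, b, c, d⟩; exact ⟨a, c⟩
    · rintro ⟨a, c⟩; exact ⟨a, by omega, c, by omega⟩
  rw [Finset.filter_congr hredu]
  rw [← Fintype.card_subtype]
  have e1 : {γ : Fin (n+1) × Bool → Bool //
      rowCount n γ true true = k ∧ rowCount n γ false true = m}
      ≃ {fg : (Fin (n+1) → Bool) × (Fin (n+1) → Bool) //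
          ((Finset.univ : Finset (Fin (n+1))).filter (fun i => fg.1 i = true)).card = k ∧
          ((Finset.univ : Finset (Fin (n+1))).filter (fun i => fg.2 i = true)).card = m} := by
    refine Equiv.subtypeEquiv (rowsEquiv n) (fun γ => ?_)
    unfold rowCount rowsEquiv
    simp only [Equiv.coe_fn_mk]
  rw [Fintype.card_congr e1,
    Fintype.card_congr (Equiv.subtypeProdEquivProd
      (p := fun f : Fin (n+1) → Bool =>
        ((Finset.univ : Finset (Fin (n+1))).filter (fun i => f i = true)).card = k)
      (q := fun g : Fin (n+1) → Bool =>
        ((Finset.univ : Finset (Fin (n+1))).filter (fun i => g i = true)).card = m)),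
    Fintype.card_prod, card_boolFun_eq, card_boolFun_eq]

lemma cardA {n k ℓ m : ℕ} (h : k + ℓ + m = n) :
    Fintype.card (Aty n k ℓ m) = Nat.choose (n+1) k * Nat.choose (n+1) m * (ℓ + 1) := by
  classical
  unfold Aty
  rw [Fintype.card_subtype]
  rw [Finset.card_filter, Fintype.sum_prod_type]
  have hinner : ∀ γ : Fin (n+1) × Bool → Bool,
      (∑ j : Fin (n+1), if (rowCount n γ true true = k ∧ rowCount n γ true false = m + ℓ + 1 ∧
        rowCount n γ false true = m ∧ rowCount n γ false false = k + ℓ + 1) ∧ j ∈ Dset n ℓ γ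
        then 1 else 0)
      = if (rowCount n γ true true = k ∧ rowCount n γ true false = m + ℓ + 1 ∧
        rowCount n γ false true = m ∧ rowCount n γ false false = k + ℓ + 1)
        then ℓ + 1 else 0 := by
    intro γ
    by_cases hrc : (rowCount n γ true true = k ∧ rowCount n γ true false = m + ℓ + 1 ∧
        rowCount n γ false true = m ∧ rowCount n γ false false = k + ℓ + 1)
    · simp only [hrc, true_and, if_true]
      have hN : Sh n γ (n+1) = -2 * ((ℓ:ℤ)+1) :=
        hN_of_rc hrc.1 hrc.2.1 hrc.2.2.1 hrc.2.2.2
      have hsum : (∑ j : Fin (n+1), if j ∈ Dset n ℓ γ then 1 else 0)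
          = (Dset n ℓ γ).card := by simp
      rw [hsum, Dset_card hN]
    · simp [hrc]
  rw [Finset.sum_congr rfl (fun γ _ => hinner γ)]
  rw [Finset.sum_ite, Finset.sum_const, Finset.sum_const_zero, add_zero, smul_eq_mul]
  rw [cardRC h]


lemma cardB : Fintype.card (Bty n k ℓ m)
    = ((Finset.univ : Finset (Fin n × Bool → Option Bool)).filter
        (fun ω => IsComplete3 n ω ∧ neutCount n ω = ℓ ∧ topB n ω = k ∧ topW n ω = m)).card
      * (n + 1) := by
  rw [Fintype.card_congr (Equiv.prodSubtypeFstEquivSubtypeProd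
    (p := fun ω => IsComplete3 n ω ∧ neutCount n ω = ℓ ∧ topB n ω = k ∧ topW n ω = m)
    (β := Fin (n+1)))]
  rw [Fintype.card_prod, Fintype.card_subtype, Fintype.card_fin]

end Main
end CL

/-- Cycle lemma for complete configurations: pairs (γ, j) with γ a two-row
configuration of `n+1` columns having `k` black and `m+ℓ+1` white particles on top,
`m` black and `k+ℓ+1` white particles on the bottom, and `j` one of the `ℓ+1`
distinguished columns, are in bijection with pairs (ω, i) with
`ω ∈ Ω^ℓ_{k,m}` a 3-TASEP complete configuration of length `n` (extended by a final
neutral column) and `i ∈ {0,…,n}`.  Consequently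
`|Ω^ℓ_{k,m}| * (n+1) = binomial (n+1) k * binomial (n+1) m * (ℓ+1)`. -/
theorem stmt9 (n k ℓ m : ℕ) (h : k + ℓ + m = n) :
    Nonempty
      ({p : (Fin (n + 1) × Bool → Bool) × Fin (n + 1) //
          (rowCount n p.1 true true = k ∧ rowCount n p.1 true false = m + ℓ + 1 ∧
            rowCount n p.1 false true = m ∧ rowCount n p.1 false false = k + ℓ + 1) ∧
          p.2 ∈ Dset n ℓ p.1} ≃
        {q : (Fin n × Bool → Option Bool) × Fin (n + 1) //
          IsComplete3 n q.1 ∧ neutCount n q.1 = ℓ ∧ topB n q.1 = k ∧ topW n q.1 = m})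
    ∧ ((Finset.univ : Finset (Fin n × Bool → Option Bool)).filter
          (fun ω => IsComplete3 n ω ∧ neutCount n ω = ℓ ∧ topB n ω = k ∧ topW n ω = m)).card
          * (n + 1)
        = Nat.choose (n + 1) k * Nat.choose (n + 1) m * (ℓ + 1) := by
  constructor
  · exact ⟨CL.mainEquiv h⟩
  · have hc := Fintype.card_congr (CL.mainEquiv (n := n) (k := k) (ℓ := ℓ) (m := m) h)
    rw [CL.cardA h, CL.cardB] at hc
    omega
end

section
/- Weighted stationarity from a weight-transporting bijection: let Ω be finite, λ : {0,...,n} → (0,1] and q : Ω → (0,∞), and let T̄ be a bijection of Ω × {0,...,n} with first component T such that λ(i) q(ω) = λ(j) q(ω') whenever T̄(ω,i) = (ω',j). Consider the Markov chain that picks i uniformly in {0,...,n} and moves from ω to T(ω,i) with probability λ(i), staying put otherwise. Then the distribution π(ω) = q(ω)/Z with Z = Σ_{ω'} q(ω') is stationary for this chain. -/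
open Finset

/-- Weighted stationarity from a weight-transporting bijection: if
`λ i · q ω = λ j · q ω'` whenever `T̄(ω,i) = (ω',j)`, then the distribution
proportional to `q` is stationary for the chain which picks `i ∈ {0,…,n}` uniformly
and moves from `ω` to the first component of `T̄(ω,i)` with probability `λ i`,
staying put otherwise. -/
theorem stmt11 (n : ℕ) (Ω : Type*) [Fintype Ω] [Nonempty Ω] [DecidableEq Ω]
    (lam : Fin (n + 1) → ℝ) (hlam : ∀ i, 0 < lam i ∧ lam i ≤ 1)
    (q : Ω → ℝ) (hq : ∀ ω, 0 < q ω)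
    (Tbar : Ω × Fin (n + 1) ≃ Ω × Fin (n + 1))
    (htrans : ∀ ω i, lam i * q ω = lam (Tbar (ω, i)).2 * q (Tbar (ω, i)).1) :
    ∀ ω' : Ω,
      ∑ ω : Ω, (q ω / ∑ w : Ω, q w) *
        (∑ i : Fin (n + 1), (1 / ((n : ℝ) + 1)) *
          (lam i * (if (Tbar (ω, i)).1 = ω' then (1 : ℝ) else 0) +
            (1 - lam i) * (if ω = ω' then (1 : ℝ) else 0)))
        = q ω' / ∑ w : Ω, q w := by
  intro ω'
  have hZ : (0:ℝ) < ∑ w : Ω, q w := Finset.sum_pos (fun w _ => hq w) univ_nonempty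
  set Z := ∑ w : Ω, q w with hZdef
  have hn : ((n:ℝ) + 1) ≠ 0 := by positivity
  -- key sum over the product type
  have key : ∑ ω : Ω, ∑ i : Fin (n+1),
      q ω * (lam i * (if (Tbar (ω, i)).1 = ω' then (1:ℝ) else 0))
      = (∑ i : Fin (n+1), lam i) * q ω' := by
    calc ∑ ω : Ω, ∑ i : Fin (n+1),
            q ω * (lam i * (if (Tbar (ω, i)).1 = ω' then (1:ℝ) else 0))
        = ∑ p : Ω × Fin (n+1), q p.1 * (lam p.2 * (if (Tbar p).1 = ω' then (1:ℝ) else 0)) :=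
          (Fintype.sum_prod_type
            (f := fun p : Ω × Fin (n+1) =>
              q p.1 * (lam p.2 * (if (Tbar p).1 = ω' then (1:ℝ) else 0)))).symm
      _ = ∑ p : Ω × Fin (n+1),
            q (Tbar p).1 * (lam (Tbar p).2 * (if (Tbar p).1 = ω' then (1:ℝ) else 0)) := by
          refine Finset.sum_congr rfl fun p _ => ?_
          have h : lam p.2 * q p.1 = lam (Tbar p).2 * q (Tbar p).1 := by
            simpa using htrans p.1 p.2
          linear_combination (if (Tbar p).1 = ω' then (1:ℝ) else 0) * h
      _ = ∑ p : Ω × Fin (n+1), q p.1 * (lam p.2 * (if p.1 = ω' then (1:ℝ) else 0)) :=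
          Equiv.sum_comp Tbar (fun p => q p.1 * (lam p.2 * (if p.1 = ω' then (1:ℝ) else 0)))
      _ = (∑ i : Fin (n+1), lam i) * q ω' := by
          rw [Fintype.sum_prod_type]
          simp only [mul_ite, mul_one, mul_zero, Finset.sum_ite_eq', Finset.mem_univ, if_true]
          rw [Finset.sum_comm]
          simp [Finset.sum_ite_eq', Finset.mul_sum, Finset.sum_mul, mul_comm]
  have key2 : ∑ ω : Ω, ∑ i : Fin (n+1),
      q ω * ((1 - lam i) * (if ω = ω' then (1:ℝ) else 0))
      = (((n:ℝ)+1) - ∑ i : Fin (n+1), lam i) * q ω' := by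
    rw [Finset.sum_comm]
    simp only [mul_ite, mul_one, mul_zero, Finset.sum_ite_eq', Finset.mem_univ, if_true]
    simp only [mul_sub, mul_one, Finset.sum_sub_distrib, Finset.sum_const, ← Finset.mul_sum,
      Finset.card_univ, Fintype.card_fin, nsmul_eq_mul, Nat.cast_add, Nat.cast_one]
    ring
  have expand : ∑ ω : Ω, (q ω / Z) *
        (∑ i : Fin (n + 1), (1 / ((n : ℝ) + 1)) *
          (lam i * (if (Tbar (ω, i)).1 = ω' then (1 : ℝ) else 0) +
            (1 - lam i) * (if ω = ω' then (1 : ℝ) else 0)))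
      = (1/Z) * (1/((n:ℝ)+1)) *
        ((∑ ω : Ω, ∑ i : Fin (n+1), q ω * (lam i * (if (Tbar (ω, i)).1 = ω' then (1:ℝ) else 0)))
        + (∑ ω : Ω, ∑ i : Fin (n+1), q ω * ((1 - lam i) * (if ω = ω' then (1:ℝ) else 0)))) := by
    rw [← Finset.sum_add_distrib, Finset.mul_sum]
    refine Finset.sum_congr rfl fun ω _ => ?_
    rw [← Finset.sum_add_distrib, Finset.mul_sum, Finset.mul_sum]
    refine Finset.sum_congr rfl fun i _ => ?_
    split_ifs <;> ring
  rw [expand, key, key2]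
  field_simp
  ring
end

section
/- A complete configuration of length n is uniquely determined by the triple (I, e', b') where I ⊆ {1,...,n} is the set of positions of columns with two equal-colored particles, e' is the simple excursion obtained by restricting the prefix-difference walk e(i) = (B(i) − W(i))/2 to the positions in I, and b' is the simple walk obtained by restricting b(i) = B_top(i) − B_bot(i) to the positions not in I; this correspondence is a bijection between complete configurations of length n and triples (I, e', b') with e' a nonnegative lattice path with ±1 steps of length |I| starting and ending at 0, and b' an arbitrary ±1-step walk of length n − |I|. -/
open Finset

-- Configurations are given by columns: `ω c = (top, bottom)`, `true` = black.

/-- Number of black particles among the first `j` columns (both rows). -/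
def colB (n : ℕ) (ω : Fin n → Bool × Bool) (j : ℕ) : ℕ :=
  ∑ c ∈ (Finset.univ : Finset (Fin n)).filter (fun c => c.val < j),
    ((cond (ω c).1 1 0) + cond (ω c).2 1 0)

/-- Number of white particles among the first `j` columns (both rows). -/
def colW (n : ℕ) (ω : Fin n → Bool × Bool) (j : ℕ) : ℕ :=
  ∑ c ∈ (Finset.univ : Finset (Fin n)).filter (fun c => c.val < j),
    ((cond (ω c).1 0 1) + cond (ω c).2 0 1)

/-- Complete configuration: balanced and prefix-positive. -/
def IsCompleteF (n : ℕ) (ω : Fin n → Bool × Bool) : Prop :=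
  colB n ω n = colW n ω n ∧ ∀ j ≤ n, colW n ω j ≤ colB n ω j

/-- The set `I` of columns with two equal-colored particles (these are the columns on
which the excursion `e(i) = (B(i) − W(i))/2` moves). -/
def eqCols (n : ℕ) (ω : Fin n → Bool × Bool) : Finset (Fin n) :=
  (Finset.univ : Finset (Fin n)).filter (fun c => (ω c).1 = (ω c).2)

/-- The steps of the excursion `e`: the colors (`true` = up step `+1`) of the
equal-colored columns, in order. -/
def exc (n : ℕ) (ω : Fin n → Bool × Bool) : Fin (eqCols n ω).card → Bool :=
  fun j => (ω (((eqCols n ω).orderIsoOfFin rfl j) : Fin n)).1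

/-- The steps of the walk `b(i) = B_top(i) − B_bot(i)`: the top colors (`true` = up
step `+1`) of the mixed columns, in order. -/
def wlk (n : ℕ) (ω : Fin n → Bool × Bool) : Fin (n - (eqCols n ω).card) → Bool :=
  fun j => (ω ((((eqCols n ω)ᶜ).orderIsoOfFin
    (by rw [Finset.card_compl, Fintype.card_fin]) j) : Fin n)).1

/-- The triple `(I, e', b')` associated to a configuration. -/
def toTriple (n : ℕ) (ω : Fin n → Bool × Bool) :
    Σ I : Finset (Fin n), (Fin I.card → Bool) × (Fin (n - I.card) → Bool) :=
  ⟨eqCols n ω, exc n ω, wlk n ω⟩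

/-- A ±1-step path of length `p` (`true` = `+1`) which is a simple excursion: every
prefix has at least as many up as down steps, and it ends at height 0. -/
def IsExcursion {p : ℕ} (e : Fin p → Bool) : Prop :=
  (∀ j ≤ p,
      ((Finset.univ : Finset (Fin p)).filter (fun i => i.val < j ∧ e i = false)).card ≤
        ((Finset.univ : Finset (Fin p)).filter (fun i => i.val < j ∧ e i = true)).card) ∧
  ((Finset.univ : Finset (Fin p)).filter (fun i => e i = true)).card =
    ((Finset.univ : Finset (Fin p)).filter (fun i => e i = false)).card

lemma colB_eq_counts (n : ℕ) (ω : Fin n → Bool × Bool) (j : ℕ) :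
    colB n ω j = 2 * ((eqCols n ω).filter (fun c => c.val < j ∧ (ω c).1 = true)).card
      + (((eqCols n ω)ᶜ).filter (fun c => c.val < j)).card := by
  unfold colB eqCols
  rw [compl_filter, filter_filter, filter_filter, card_filter, card_filter,
    Finset.sum_filter, Finset.mul_sum, ← Finset.sum_add_distrib]
  refine Finset.sum_congr rfl fun c _ => ?_
  cases h1 : (ω c).1 <;> cases h2 : (ω c).2 <;> by_cases hc : c.val < j <;>
    simp [h1, h2, hc]

lemma colW_eq_counts (n : ℕ) (ω : Fin n → Bool × Bool) (j : ℕ) :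
    colW n ω j = 2 * ((eqCols n ω).filter (fun c => c.val < j ∧ (ω c).1 = false)).card
      + (((eqCols n ω)ᶜ).filter (fun c => c.val < j)).card := by
  unfold colW eqCols
  rw [compl_filter, filter_filter, filter_filter, card_filter, card_filter,
    Finset.sum_filter, Finset.mul_sum, ← Finset.sum_add_distrib]
  refine Finset.sum_congr rfl fun c _ => ?_
  cases h1 : (ω c).1 <;> cases h2 : (ω c).2 <;> by_cases hc : c.val < j <;>
    simp [h1, h2, hc]

lemma count_transfer (n : ℕ) (ω : Fin n → Bool × Bool) (b : Bool) (j k : ℕ)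
    (h : ∀ i : Fin (eqCols n ω).card,
        i.val < k ↔ (((eqCols n ω).orderIsoOfFin rfl i : Fin n)).val < j) :
    ((univ : Finset (Fin (eqCols n ω).card)).filter
        (fun i => i.val < k ∧ exc n ω i = b)).card
      = ((eqCols n ω).filter (fun c => c.val < j ∧ (ω c).1 = b)).card := by
  apply card_bij (fun i _ => (((eqCols n ω).orderIsoOfFin rfl i : Fin n)))
  · intro i hi
    simp only [mem_filter, mem_univ, true_and] at hi ⊢
    exact ⟨((eqCols n ω).orderIsoOfFin rfl i).2, (h i).1 hi.1, hi.2⟩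
  · intro i _ i' _ hh
    exact ((eqCols n ω).orderIsoOfFin rfl).injective (Subtype.ext hh)
  · intro c hc
    simp only [mem_filter] at hc
    refine ⟨((eqCols n ω).orderIsoOfFin rfl).symm ⟨c, hc.1⟩, ?_, ?_⟩
    · simp only [mem_filter, mem_univ, true_and]
      refine ⟨?_, ?_⟩
      · rw [h]; simpa using hc.2.1
      · show (ω _).1 = b
        simpa using hc.2.2
    · simp

lemma downclosed_iff {p : ℕ} (S : Finset (Fin p))
    (hS : ∀ i i' : Fin p, i' ≤ i → i ∈ S → i' ∈ S) (i : Fin p) :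
    i ∈ S ↔ i.val < S.card := by
  constructor
  · intro hi
    have hsub : Finset.Iic i ⊆ S := fun x hx => hS i x (mem_Iic.mp hx) hi
    have := card_le_card hsub
    rw [Fin.card_Iic] at this
    omega
  · intro hlt
    by_contra hi
    have hsub : S ⊆ Finset.Iio i := by
      intro x hx
      rw [mem_Iio]
      by_contra hxi
      exact hi (hS x i (le_of_not_gt hxi) hx)
    have := card_le_card hsub
    rw [Fin.card_Iio] at this
    omega

lemma complete_iff_excursion (n : ℕ) (ω : Fin n → Bool × Bool) :
    IsCompleteF n ω ↔ IsExcursion (exc n ω) := by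
  set p := (eqCols n ω).card with hp
  set φ := (eqCols n ω).orderIsoOfFin rfl with hφ
  have hA : ∀ k ≤ p, ∃ j ≤ n, ∀ i : Fin p, i.val < k ↔ ((φ i : Fin n)).val < j := by
    intro k hk
    rcases lt_or_eq_of_le hk with hk' | hk'
    · refine ⟨((φ ⟨k, hk'⟩ : Fin n)).val, le_of_lt ((φ ⟨k, hk'⟩ : Fin n)).isLt,
        fun i => ?_⟩
      rw [show ((φ i : Fin n)).val < ((φ ⟨k, hk'⟩ : Fin n)).val ↔ i < ⟨k, hk'⟩ from by
        rw [← Fin.lt_def, Subtype.coe_lt_coe, φ.lt_iff_lt]]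
      exact Iff.rfl
    · exact ⟨n, le_rfl, fun i => by
        have := i.isLt
        simp only [hk']
        simp [this, ((φ i : Fin n)).isLt]⟩
  have hB : ∀ j ≤ n, ∃ k ≤ p, ∀ i : Fin p, i.val < k ↔ ((φ i : Fin n)).val < j := by
    intro j hj
    set S := (univ : Finset (Fin p)).filter (fun i => ((φ i : Fin n)).val < j) with hS
    have hdc : ∀ i i' : Fin p, i' ≤ i → i ∈ S → i' ∈ S := by
      intro i i' hle hi
      simp only [hS, mem_filter, mem_univ, true_and] at hi ⊢
      have : (φ i' : Fin n) ≤ (φ i : Fin n) := Subtype.coe_le_coe.mpr (φ.le_iff_le.mpr hle)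
      exact lt_of_le_of_lt (Fin.le_def.mp this) hi
    refine ⟨S.card, le_trans (card_filter_le _ _) (by simp; exact le_rfl), fun i => ?_⟩
    rw [← downclosed_iff S hdc i]
    simp [hS]
  have htrn : ∀ i : Fin p, i.val < p ↔ ((φ i : Fin n)).val < n :=
    fun i => by simp [i.isLt, ((φ i : Fin n)).isLt]
  have efull : ∀ b : Bool,
      ((univ : Finset (Fin p)).filter (fun i => exc n ω i = b))
        = (univ : Finset (Fin p)).filter (fun i => i.val < p ∧ exc n ω i = b) := by
    intro b; apply filter_congr; intro i _; simp [i.isLt]; exact fun _ => i.isLt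
  have cfull : ∀ (Q : Fin n → Prop) [DecidablePred Q],
      ((eqCols n ω).filter (fun c => c.val < n ∧ Q c))
        = (eqCols n ω).filter Q := by
    intro Q _; apply filter_congr; intro c _; simp [c.isLt]
  constructor
  · rintro ⟨hbal, hpre⟩
    constructor
    · intro k hk
      obtain ⟨j, hj, htr⟩ := hA k hk
      rw [count_transfer n ω false j k htr, count_transfer n ω true j k htr]
      have := hpre j hj
      rw [colB_eq_counts, colW_eq_counts] at this
      omega
    · rw [efull true, efull false, count_transfer n ω true n p htrn,
        count_transfer n ω false n p htrn]
      rw [colB_eq_counts, colW_eq_counts] at hbal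
      omega
  · rintro ⟨hpre, hend⟩
    constructor
    · rw [colB_eq_counts, colW_eq_counts]
      rw [efull true, efull false, count_transfer n ω true n p htrn,
        count_transfer n ω false n p htrn] at hend
      omega
    · intro j hj
      obtain ⟨k, hk, htr⟩ := hB j hj
      rw [colB_eq_counts, colW_eq_counts,
        ← count_transfer n ω false j k htr, ← count_transfer n ω true j k htr]
      have := hpre k hk
      omega

lemma toTriple_eq (n : ℕ) (ω : Fin n → Bool × Bool) (I : Finset (Fin n))
    (h : eqCols n ω = I) :
    toTriple n ω = ⟨I, fun j => (ω ((I.orderIsoOfFin rfl j : I) : Fin n)).1,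
      fun j => (ω (((Iᶜ).orderIsoOfFin
        (by rw [Finset.card_compl, Fintype.card_fin]) j : (Iᶜ : Finset (Fin n))) : Fin n)).1⟩ := by
  subst h
  rfl

lemma toTriple_inj (n : ℕ) (ω ω' : Fin n → Bool × Bool)
    (h : toTriple n ω = toTriple n ω') : ω = ω' := by
  have h1 : eqCols n ω' = eqCols n ω := by
    have := congrArg Sigma.fst h
    simpa [toTriple] using this.symm
  have hA := toTriple_eq n ω (eqCols n ω) rfl
  have hB := toTriple_eq n ω' (eqCols n ω) h1
  have h2 := hA.symm.trans (h.trans hB)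
  have h3 := eq_of_heq (Sigma.ext_iff.mp h2).2
  rw [Prod.mk.injEq] at h3
  funext c
  by_cases hc : c ∈ eqCols n ω
  · have hc' : c ∈ eqCols n ω' := h1 ▸ hc
    have := congrFun h3.1 (((eqCols n ω).orderIsoOfFin rfl).symm ⟨c, hc⟩)
    simp only [OrderIso.apply_symm_apply] at this
    have e1 : (ω c).2 = (ω c).1 := ((mem_filter.mp hc).2).symm
    have e2 : (ω' c).2 = (ω' c).1 := ((mem_filter.mp hc').2).symm
    exact Prod.ext this (by rw [e1, e2, this])
  · have hcm : c ∈ (eqCols n ω)ᶜ := by simpa using hc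
    have hc' : c ∉ eqCols n ω' := h1 ▸ hc
    have := congrFun h3.2 ((((eqCols n ω)ᶜ).orderIsoOfFin
      (by rw [Finset.card_compl, Fintype.card_fin])).symm ⟨c, hcm⟩)
    simp only [OrderIso.apply_symm_apply] at this
    have e1 : ¬ ((ω c).1 = (ω c).2) := by simpa [eqCols] using hc
    have e2 : ¬ ((ω' c).1 = (ω' c).2) := by simpa [eqCols] using hc'
    refine Prod.ext this ?_
    cases hx : (ω c).1 <;> cases hy : (ω c).2 <;> cases hz : (ω' c).2 <;>
      simp_all

def ofTriple (n : ℕ)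
    (t : Σ I : Finset (Fin n), (Fin I.card → Bool) × (Fin (n - I.card) → Bool)) :
    Fin n → Bool × Bool :=
  fun c =>
    if h : c ∈ t.1 then
      ((t.2.1 ((t.1.orderIsoOfFin rfl).symm ⟨c, h⟩)),
        (t.2.1 ((t.1.orderIsoOfFin rfl).symm ⟨c, h⟩)))
    else
      ((t.2.2 (((t.1ᶜ).orderIsoOfFin
          (by rw [Finset.card_compl, Fintype.card_fin])).symm ⟨c, by simpa using h⟩)),
        !(t.2.2 (((t.1ᶜ).orderIsoOfFin
          (by rw [Finset.card_compl, Fintype.card_fin])).symm ⟨c, by simpa using h⟩)))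

lemma eqCols_ofTriple (n : ℕ)
    (t : Σ I : Finset (Fin n), (Fin I.card → Bool) × (Fin (n - I.card) → Bool)) :
    eqCols n (ofTriple n t) = t.1 := by
  ext c
  rw [eqCols, Finset.mem_filter]
  simp only [eqCols, mem_filter, mem_univ, true_and, ofTriple]
  by_cases h : c ∈ t.1 <;> simp [h]

lemma toTriple_ofTriple (n : ℕ)
    (t : Σ I : Finset (Fin n), (Fin I.card → Bool) × (Fin (n - I.card) → Bool)) :
    toTriple n (ofTriple n t) = t := by
  obtain ⟨I, e, b⟩ := t
  rw [toTriple_eq n _ I (eqCols_ofTriple n ⟨I, e, b⟩)]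
  refine congrArg (Sigma.mk I) (Prod.ext ?_ ?_) <;> funext j
  · have hm : ((I.orderIsoOfFin rfl j : I) : Fin n) ∈ I := (I.orderIsoOfFin rfl j).2
    show (ofTriple n ⟨I, e, b⟩ _).1 = e j
    simp only [ofTriple, dif_pos hm]
    rw [Subtype.coe_eta, OrderIso.symm_apply_apply]
  · have hm : (((Iᶜ).orderIsoOfFin
        (by rw [Finset.card_compl, Fintype.card_fin]) j : (Iᶜ : Finset (Fin n))) : Fin n)
        ∈ (Iᶜ : Finset (Fin n)) := ((Iᶜ).orderIsoOfFin _ j).2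
    have hm' : (((Iᶜ).orderIsoOfFin
        (by rw [Finset.card_compl, Fintype.card_fin]) j : (Iᶜ : Finset (Fin n))) : Fin n)
        ∉ I := Finset.mem_compl.mp hm
    show (ofTriple n ⟨I, e, b⟩ _).1 = b j
    simp only [ofTriple, dif_neg hm']
    rw [Subtype.coe_eta, OrderIso.symm_apply_apply]

/-- A complete configuration of length `n` is uniquely determined by the triple
`(I, e', b')`, and this correspondence is a bijection between complete configurations
and triples where `e'` is a simple excursion of length `|I|` and `b'` an arbitrary
±1-walk of length `n − |I|`. -/
theorem stmt17 (n : ℕ) :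
    Function.Injective
      (fun ω : {ω : Fin n → Bool × Bool // IsCompleteF n ω} => toTriple n ω.1)
    ∧ Set.range
        (fun ω : {ω : Fin n → Bool × Bool // IsCompleteF n ω} => toTriple n ω.1)
      = {t : Σ I : Finset (Fin n), (Fin I.card → Bool) × (Fin (n - I.card) → Bool) |
          IsExcursion t.2.1} := by
  constructor
  · intro ω ω' h
    exact Subtype.ext (toTriple_inj n ω.1 ω'.1 h)
  · ext t
    constructor
    · rintro ⟨ω, rfl⟩
      exact (complete_iff_excursion n ω.1).mp ω.2
    · intro ht
      have hT := toTriple_ofTriple n t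
      have hx : IsExcursion (exc n (ofTriple n t)) := by
        show IsExcursion (toTriple n (ofTriple n t)).2.1
        rw [hT]
        exact ht
      exact ⟨⟨ofTriple n t, (complete_iff_excursion n _).mpr hx⟩, hT⟩
end
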